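/- arXiv:2404.03867 — 3 statements merged into one kernel-verified Lean document; each statement's English description precedes it below -/
import Mathlib

section
/- Suppose P is irreducible, aperiodic, and reversible with respect to π. Let E ⊆ Ē, w : E → (0,∞), and let φ : Γ_E → [0,∞) satisfy Σ_{γ∈Γ_E(x,x')} φ(γ) = π(x)·π(x') for all x ≠ x'. Then Gap(P) ≥ 1/A(E,w,φ), where Gap(P) denotes the variational quantity inf{ E(f)/Var_π(f) : Var_π(f) ≠ 0 } (equal to one minus the second-largest eigenvalue of P). -/
open Finset

noncomputable section

variable {X : Type*}

/-- Total variation distance between two (finitely supported) distributions. -/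
def tvDist [Fintype X] (ζ μ : X → ℝ) : ℝ :=
  ⨆ A : Finset X, |∑ a ∈ A, ζ a - ∑ a ∈ A, μ a|

/-- The lazy version `(P + I)/2` of a transition matrix. -/
def lazyM [Fintype X] [DecidableEq X] (P : Matrix X X ℝ) : Matrix X X ℝ :=
  (2 : ℝ)⁻¹ • (P + 1)

/-- Mixing time started from `x`. -/
def mixTimeFrom [Fintype X] [DecidableEq X] (P : Matrix X X ℝ) (μ : X → ℝ) (ε : ℝ) (x : X) : ℕ :=
  sInf {t : ℕ | tvDist (fun y => (P ^ t) x y) μ ≤ ε}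

/-- Worst-case mixing time. -/
def mixTime [Fintype X] [DecidableEq X] (P : Matrix X X ℝ) (μ : X → ℝ) (ε : ℝ) : ℕ :=
  Finset.univ.sup (mixTimeFrom P μ ε)

/-- Variational spectral gap of a reversible transition matrix. -/
def specGap [Fintype X] (P : Matrix X X ℝ) (μ : X → ℝ) : ℝ :=
  sInf { r : ℝ | ∃ f : X → ℝ,
    (2⁻¹ * ∑ x, ∑ y, (f x - f y) ^ 2 * μ x * μ y) ≠ 0 ∧
    r = (2⁻¹ * ∑ x, ∑ y, (f x - f y) ^ 2 * P x y * μ x) /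
        (2⁻¹ * ∑ x, ∑ y, (f x - f y) ^ 2 * μ x * μ y) }

/-- Restricted spectral gap on `X0`. -/
def restGap [Fintype X] (P : Matrix X X ℝ) (μ : X → ℝ) (X0 : Finset X) : ℝ :=
  sInf { r : ℝ | ∃ f : X → ℝ,
    0 < (∑ x ∈ X0, ∑ y ∈ X0, (f x - f y) ^ 2 * μ x * μ y) ∧
    r = (∑ x ∈ X0, ∑ y ∈ X0, (f x - f y) ^ 2 * P x y * μ x) /
        (∑ x ∈ X0, ∑ y ∈ X0, (f x - f y) ^ 2 * μ x * μ y) }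

/-- `c(ρ) = 4 / (1 - ρ^{-1/2})³`. -/
def cFun (ρ : ℝ) : ℝ := 4 / (1 - ρ ^ (-(2 : ℝ)⁻¹)) ^ 3

/-- Maximum neighborhood size. -/
def Mmax [Fintype X] (N : X → Finset X) : ℕ := Finset.univ.sup fun x => (N x).card

/-- Minimal value of `π`. -/
def piMin [Fintype X] [Nonempty X] (π : X → ℝ) : ℝ := ⨅ x, π x

/-- `R = min_{x ≠ x*} max_{y ∈ N(x)} π(y)/π(x)`. -/
def Rval [Fintype X] (π : X → ℝ) (N : X → Finset X) (xstar : X) : ℝ :=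
  sInf ((fun x => sSup ((fun y => π y / π x) '' (N x : Set X))) '' {x | x ≠ xstar})

/-- Restricted `R|_{X₀}`. -/
def RvalRes [Fintype X] [DecidableEq X] (π : X → ℝ) (N : X → Finset X) (X0 : Finset X)
    (x0star : X) : ℝ :=
  sInf ((fun x => sSup ((fun y => π y / π x) '' ((N x ∩ X0 : Finset X) : Set X))) ''
    {x | x ∈ X0 ∧ x ≠ x0star})

/-- Random walk Metropolis–Hastings transition matrix. -/
def rwMH [Fintype X] [DecidableEq X] (π : X → ℝ) (N : X → Finset X) : Matrix X X ℝ :=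
  Matrix.of fun x y =>
    if y ∈ N x then min (((N x).card : ℝ))⁻¹ (π y / (π x * ((N y).card : ℝ)))
    else if y = x then
      1 - ∑ z ∈ N x, min (((N x).card : ℝ))⁻¹ (π z / (π x * ((N z).card : ℝ)))
    else 0

/-- The clipping function `clip(u, ℓ, L)`. -/
def clip (l L u : ℝ) : ℝ := if u < l then l else if u ≤ L then u else L

/-- Normalizing constant of the informed proposal. -/
def Zh [Fintype X] (π : X → ℝ) (N : X → Finset X) (l L : ℝ) (x : X) : ℝ :=
  ∑ y ∈ N x, clip l L (π y / π x)

/-- Informed proposal kernel. -/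
def Kh [Fintype X] [DecidableEq X] (π : X → ℝ) (N : X → Finset X) (l L : ℝ) (x y : X) : ℝ :=
  (if y ∈ N x then clip l L (π y / π x) else 0) / Zh π N l L x

/-- Informed Metropolis–Hastings transition matrix. -/
def infMH [Fintype X] [DecidableEq X] (π : X → ℝ) (N : X → Finset X) (l L : ℝ) :
    Matrix X X ℝ :=
  Matrix.of fun x y =>
    if y = x then
      1 - ∑ z ∈ Finset.univ.erase x,
        Kh π N l L x z * min 1 ((π z * Kh π N l L z x) / (π x * Kh π N l L x z))
    else Kh π N l L x y * min 1 ((π y * Kh π N l L y x) / (π x * Kh π N l L x y))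

/-- List of consecutive edges of a list of vertices. -/
def edgeList : List X → List (X × X)
  | a :: b :: rest => (a, b) :: edgeList (b :: rest)
  | _ => []

/-- `γ` is a path from `x` to `y` (x ≠ y) with all edges in `E` and no repeated edge. -/
def IsPathIn (E : Finset (X × X)) (x y : X) (γ : List X) : Prop :=
  x ≠ y ∧ γ.head? = some x ∧ γ.getLast? = some y ∧
    (∀ e ∈ edgeList γ, e ∈ E) ∧ (edgeList γ).Nodup

/-- `Φ(x,y) = Σ_{γ ∈ Γ_E(x,y)} φ(γ)`. -/
def flowBetween (E : Finset (X × X)) (φ : List X → ℝ) (x y : X) : ℝ :=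
  ∑' γ : {γ : List X // IsPathIn E x y γ}, φ γ

/-- Flow from `x` to `y` through the edge `e`. -/
def flowBetweenThrough (E : Finset (X × X)) (φ : List X → ℝ) (x y : X) (e : X × X) : ℝ :=
  ∑' γ : {γ : List X // IsPathIn E x y γ ∧ e ∈ edgeList γ}, φ γ

/-- `w`-length of a path. -/
def wlen (w : X × X → ℝ) (γ : List X) : ℝ := ((edgeList γ).map w).sum

/-- Congestion `A(E, w, φ)`. -/
def congestion [Fintype X] (π : X → ℝ) (P : Matrix X X ℝ) (E : Finset (X × X))
    (w : X × X → ℝ) (φ : List X → ℝ) : ℝ :=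
  ⨆ e ∈ E,
    (∑' γ : {γ : List X // (∃ x y, IsPathIn E x y γ) ∧ e ∈ edgeList γ}, wlen w γ * φ γ) /
      (π e.1 * P e.1 e.2 * w e)

/-- `N_S(x) = {x' ∈ N(x) : π(x')/π(x) ≥ S}`. -/
def NS [Fintype X] (π : X → ℝ) (N : X → Finset X) (S : ℝ) (x : X) : Finset X :=
  (N x).filter fun y => S ≤ π y / π x

/-- Edge set `E_S`. -/
def ES [Fintype X] [DecidableEq X] (π : X → ℝ) (N : X → Finset X) (S : ℝ) : Finset (X × X) :=
  Finset.univ.filter fun e => e.1 ∈ NS π N S e.2 ∨ e.2 ∈ NS π N S e.1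

/-- Restricted `N|^S_{X₀}(x)`. -/
def NSres [Fintype X] [DecidableEq X] (π : X → ℝ) (N : X → Finset X) (X0 : Finset X) (S : ℝ)
    (x : X) : Finset X :=
  ((N x) ∩ X0).filter fun y => S ≤ π y / π x

/-- Restricted edge set `E_S⁰`. -/
def ESres [Fintype X] [DecidableEq X] (π : X → ℝ) (N : X → Finset X) (X0 : Finset X)
    (S : ℝ) : Finset (X × X) :=
  Finset.univ.filter fun e =>
    (e.1 ∈ X0 ∧ e.2 ∈ X0) ∧ (e.1 ∈ NSres π N X0 S e.2 ∨ e.2 ∈ NSres π N X0 S e.1)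

end

/-! Since `φ` routes mass `π x * π y` from `x` to `y`, twice the variance of `f` is a
`φ`-weighted sum over paths `γ : x ⟶ y` of `(f x - f y) ^ 2`. Telescoping `f x - f y` along `γ`
and applying Cauchy–Schwarz with the weights `w` bounds each term by
`|γ|_w * ∑ e ∈ γ, (f e.1 - f e.2) ^ 2 / w e`. Exchanging the sums over paths and edges, each edge
`e` collects its load `∑ γ ∋ e, |γ|_w * φ γ ≤ A * Q e * w e`, so `Var f ≤ A * 𝓔 f`, which is the
bound on the spectral gap. -/

theorem tsum_subtype_eq_sum_filter {β M : Type*} [AddCommMonoid M] [TopologicalSpace M]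
    {p : β → Prop} [DecidablePred p] {s : Finset β} (hs : ∀ b, p b → b ∈ s) (f : β → M) :
    ∑' b : {b // p b}, f b = ∑ b ∈ s with p b, f b := by
  refine (tsum_subtype {b | p b} f).trans ?_
  rw [tsum_eq_sum (s := s) fun b hb => Set.indicator_of_notMem (s := {b | p b})
    (fun hp => hb (hs b hp)) f, sum_filter]
  exact sum_congr rfl fun b _ => Set.indicator_apply _ _ _

theorem one_div_le_div_of_le_mul {a b c : ℝ} (hb : 0 < b) (hc : 0 ≤ c) (h : b ≤ a * c) :
    1 / a ≤ c / b := by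
  have ha : 0 < a := pos_of_mul_pos_left (hb.trans_le h) hc
  rw [div_le_div_iff₀ ha hb]
  linarith

section CanonicalPaths

variable {X : Type*}

theorem length_edgeList : ∀ γ : List X, (edgeList γ).length = γ.length - 1
  | a :: b :: r => by simp [edgeList, length_edgeList (b :: r)]
  | [] => rfl
  | [_] => rfl

theorem sum_map_edgeList_sub {G : Type*} [AddCommGroup G] (f : X → G) :
    ∀ {γ : List X} {a b : X}, γ.head? = some a → γ.getLast? = some b →
      ((edgeList γ).map fun e => f e.1 - f e.2).sum = f a - f b
  | [], _, _, ha, _ => by simp at ha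
  | [c], a, b, ha, hb => by
    simp only [List.head?_cons, List.getLast?_singleton, Option.some.injEq] at ha hb
    subst ha hb
    simp [edgeList]
  | c :: d :: r, a, b, ha, hb => by
    simp only [List.head?_cons, Option.some.injEq] at ha
    subst ha
    rw [List.getLast?_cons_cons] at hb
    simp only [edgeList, List.map_cons, List.sum_cons, sum_map_edgeList_sub f rfl hb]
    abel

namespace IsPathIn

variable {E : Finset (X × X)} {x y : X} {γ : List X}

theorem endpoints_eq {x' y' : X} (h : IsPathIn E x y γ) (h' : IsPathIn E x' y' γ) :
    x = x' ∧ y = y' := by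
  obtain ⟨-, hx, hy, -⟩ := h
  obtain ⟨-, hx', hy', -⟩ := h'
  exact ⟨Option.some.inj (hx.symm.trans hx'), Option.some.inj (hy.symm.trans hy')⟩

theorem length_le [Fintype X] (h : IsPathIn E x y γ) : γ.length ≤ Fintype.card (X × X) + 1 := by
  have := h.2.2.2.2.length_le_card
  rw [length_edgeList] at this
  omega

theorem wlen_nonneg {w : X × X → ℝ} (hw : ∀ e ∈ E, 0 < w e) (h : IsPathIn E x y γ) :
    0 ≤ wlen w γ :=
  List.sum_nonneg fun _ ha => by
    obtain ⟨e, he, rfl⟩ := List.mem_map.1 ha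
    exact (hw e (h.2.2.2.1 e he)).le

variable [DecidableEq X]

theorem sub_eq_sum_edges (h : IsPathIn E x y γ) (f : X → ℝ) :
    f x - f y = ∑ e ∈ (edgeList γ).toFinset, (f e.1 - f e.2) := by
  rw [List.sum_toFinset _ h.2.2.2.2, sum_map_edgeList_sub f h.2.1 h.2.2.1]

theorem wlen_eq_sum_edges (h : IsPathIn E x y γ) (w : X × X → ℝ) :
    wlen w γ = ∑ e ∈ (edgeList γ).toFinset, w e :=
  (List.sum_toFinset _ h.2.2.2.2).symm

theorem sq_sub_le_wlen_mul {w : X × X → ℝ} (hw : ∀ e ∈ E, 0 < w e) (h : IsPathIn E x y γ)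
    (f : X → ℝ) :
    (f x - f y) ^ 2 ≤ wlen w γ * ∑ e ∈ (edgeList γ).toFinset, (f e.1 - f e.2) ^ 2 / w e := by
  have hpos : ∀ e ∈ (edgeList γ).toFinset, 0 < w e :=
    fun e he => hw e (h.2.2.2.1 e (List.mem_toFinset.1 he))
  rw [h.sub_eq_sum_edges f, h.wlen_eq_sum_edges w]
  refine sum_sq_le_sum_mul_sum_of_sq_le_mul _ (fun e he => (hpos e he).le)
    (fun e he => div_nonneg (sq_nonneg _) (hpos e he).le) fun e he => ?_
  rw [mul_div_cancel₀ _ (hpos e he).ne']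

end IsPathIn

theorem finite_setOf_isPathIn [Fintype X] (E : Finset (X × X)) :
    {γ : List X | ∃ x y, IsPathIn E x y γ}.Finite :=
  (List.finite_length_le X _).subset fun _ ⟨_, _, h⟩ => h.length_le

noncomputable def pathsIn [Fintype X] (E : Finset (X × X)) : Finset (List X) :=
  (finite_setOf_isPathIn E).toFinset

theorem mem_pathsIn [Fintype X] {E : Finset (X × X)} {γ : List X} :
    γ ∈ pathsIn E ↔ ∃ x y, IsPathIn E x y γ :=
  (finite_setOf_isPathIn E).mem_toFinset

open Classical in
theorem sum_sum_sum_filter_isPathIn [Fintype X] (E : Finset (X × X)) (G : List X → ℝ) :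
    ∑ x, ∑ y, ∑ γ ∈ pathsIn E with IsPathIn E x y γ, G γ = ∑ γ ∈ pathsIn E, G γ := by
  simp_rw [sum_filter]
  conv_lhs => enter [2, x]; rw [sum_comm]
  rw [sum_comm]
  refine sum_congr rfl fun γ hγ => ?_
  obtain ⟨x₀, y₀, h₀⟩ := mem_pathsIn.1 hγ
  rw [Fintype.sum_eq_single x₀, Fintype.sum_eq_single y₀, if_pos h₀]
  · exact fun y hy => if_neg fun h => hy (h₀.endpoints_eq h).2.symm
  · exact fun x hx => sum_eq_zero fun y _ => if_neg fun h => hx (h₀.endpoints_eq h).1.symm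

theorem sum_sq_mul_le_sum_pathsIn [Fintype X] [DecidableEq X] {π : X → ℝ}
    {E : Finset (X × X)} {w : X × X → ℝ} {φ : List X → ℝ} (hw : ∀ e ∈ E, 0 < w e)
    (hφ : ∀ γ, (∃ x y, IsPathIn E x y γ) → 0 ≤ φ γ)
    (hflow : ∀ x y, x ≠ y → flowBetween E φ x y = π x * π y) (f : X → ℝ) :
    ∑ x, ∑ y, (f x - f y) ^ 2 * π x * π y ≤
      ∑ γ ∈ pathsIn E, ∑ e ∈ (edgeList γ).toFinset,
        (f e.1 - f e.2) ^ 2 / w e * (wlen w γ * φ γ) := by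
  classical
  have hsplit : ∀ x y, (f x - f y) ^ 2 * π x * π y =
      ∑ γ ∈ pathsIn E with IsPathIn E x y γ, (f x - f y) ^ 2 * φ γ := by
    intro x y
    rcases eq_or_ne x y with rfl | hxy
    · simp
    · rw [← mul_sum, mul_assoc, ← hflow x y hxy, flowBetween,
        tsum_subtype_eq_sum_filter fun γ h => mem_pathsIn.2 ⟨x, y, h⟩]
  calc ∑ x, ∑ y, (f x - f y) ^ 2 * π x * π y
      = ∑ x, ∑ y, ∑ γ ∈ pathsIn E with IsPathIn E x y γ, (f x - f y) ^ 2 * φ γ := by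
        simp_rw [hsplit]
    _ ≤ ∑ x, ∑ y, ∑ γ ∈ pathsIn E with IsPathIn E x y γ,
          wlen w γ * (∑ e ∈ (edgeList γ).toFinset, (f e.1 - f e.2) ^ 2 / w e) * φ γ := by
        refine sum_le_sum fun x _ => sum_le_sum fun y _ => sum_le_sum fun γ hγ => ?_
        obtain ⟨hγE, hγ⟩ := mem_filter.1 hγ
        exact mul_le_mul_of_nonneg_right (hγ.sq_sub_le_wlen_mul hw f) (hφ γ (mem_pathsIn.1 hγE))
    _ = _ := by
        rw [sum_sum_sum_filter_isPathIn]
        refine sum_congr rfl fun γ _ => ?_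
        rw [mul_sum, sum_mul]
        exact sum_congr rfl fun e _ => by ring

noncomputable def edgeLoad (E : Finset (X × X)) (w : X × X → ℝ) (φ : List X → ℝ) (e : X × X) : ℝ :=
  ∑' γ : {γ : List X // (∃ x y, IsPathIn E x y γ) ∧ e ∈ edgeList γ}, wlen w γ * φ γ

theorem edgeLoad_nonneg {E : Finset (X × X)} {w : X × X → ℝ} {φ : List X → ℝ}
    (hw : ∀ e ∈ E, 0 < w e)
    (hφ : ∀ γ, (∃ x y, IsPathIn E x y γ) → 0 ≤ φ γ) (e : X × X) : 0 ≤ edgeLoad E w φ e :=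
  tsum_nonneg fun ⟨γ, ⟨x, y, h⟩, _⟩ => mul_nonneg (h.wlen_nonneg hw) (hφ γ ⟨x, y, h⟩)

section Congestion

variable [Fintype X] {π : X → ℝ} {P : Matrix X X ℝ} {E : Finset (X × X)} {w : X × X → ℝ}
  {φ : List X → ℝ}

theorem congestion_eq_iSup_edgeLoad :
    congestion π P E w φ = ⨆ e ∈ E, edgeLoad E w φ e / (π e.1 * P e.1 e.2 * w e) :=
  rfl

theorem edgeLoad_eq_sum [DecidableEq X] (e : X × X) :
    edgeLoad E w φ e = ∑ γ ∈ pathsIn E with e ∈ edgeList γ, wlen w γ * φ γ := by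
  classical
  refine (tsum_subtype_eq_sum_filter
    (p := fun γ => (∃ x y, IsPathIn E x y γ) ∧ e ∈ edgeList γ) (fun γ h => mem_pathsIn.2 h.1)
    fun γ => wlen w γ * φ γ).trans ?_
  exact sum_congr (filter_congr fun γ hγ => and_iff_right (mem_pathsIn.1 hγ)) fun _ _ => rfl

theorem sum_pathsIn_sum_edges_eq_sum_edgeLoad [DecidableEq X] (G : X × X → ℝ) :
    ∑ γ ∈ pathsIn E, ∑ e ∈ (edgeList γ).toFinset, G e * (wlen w γ * φ γ) =
      ∑ e ∈ E, G e * edgeLoad E w φ e := by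
  simp_rw [edgeLoad_eq_sum, mul_sum]
  refine sum_comm' fun γ e => ?_
  rw [mem_filter, List.mem_toFinset]
  constructor
  · rintro ⟨hγ, he⟩
    obtain ⟨x, y, h⟩ := mem_pathsIn.1 hγ
    exact ⟨⟨hγ, he⟩, h.2.2.2.1 e he⟩
  · exact fun h => h.1

theorem congestion_nonneg (hπ : ∀ x, 0 ≤ π x) (hP : ∀ x y, 0 ≤ P x y) (hw : ∀ e ∈ E, 0 < w e)
    (hφ : ∀ γ, (∃ x y, IsPathIn E x y γ) → 0 ≤ φ γ) : 0 ≤ congestion π P E w φ :=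
  Real.iSup_nonneg fun e => Real.iSup_nonneg fun he =>
    div_nonneg (edgeLoad_nonneg hw hφ e) (mul_nonneg (mul_nonneg (hπ _) (hP _ _)) (hw e he).le)

theorem edgeLoad_le_congestion_mul {e : X × X} (he : e ∈ E)
    (hQ : 0 < π e.1 * P e.1 e.2 * w e) :
    edgeLoad E w φ e ≤ congestion π P E w φ * (π e.1 * P e.1 e.2 * w e) := by
  rw [← div_le_iff₀ hQ, congestion_eq_iSup_edgeLoad]
  exact (ciSup_pos he).symm.le.trans <| le_ciSup
    (f := fun e => ⨆ _ : e ∈ E, edgeLoad E w φ e / (π e.1 * P e.1 e.2 * w e))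
    (Set.finite_range _).bddAbove e

theorem congestion_eq_zero_of_subsingleton [Subsingleton X] : congestion π P E w φ = 0 := by
  have hload : ∀ e, edgeLoad E w φ e = 0 := fun e => by
    have : IsEmpty {γ : List X // (∃ x y, IsPathIn E x y γ) ∧ e ∈ edgeList γ} :=
      ⟨fun ⟨_, ⟨x, y, h⟩, _⟩ => h.1 (Subsingleton.elim x y)⟩
    exact tsum_empty
  simp [congestion_eq_iSup_edgeLoad, hload]

end Congestion

noncomputable def varianceForm [Fintype X] (μ f : X → ℝ) : ℝ :=
  2⁻¹ * ∑ x, ∑ y, (f x - f y) ^ 2 * μ x * μ y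

noncomputable def dirichletForm [Fintype X] (P : Matrix X X ℝ) (μ f : X → ℝ) : ℝ :=
  2⁻¹ * ∑ x, ∑ y, (f x - f y) ^ 2 * P x y * μ x

section Forms

variable [Fintype X] {P : Matrix X X ℝ} {μ : X → ℝ}

theorem specGap_eq_sInf : specGap P μ =
    sInf {r | ∃ f, varianceForm μ f ≠ 0 ∧ r = dirichletForm P μ f / varianceForm μ f} :=
  rfl

theorem varianceForm_nonneg (hμ : ∀ x, 0 ≤ μ x) (f : X → ℝ) : 0 ≤ varianceForm μ f :=
  mul_nonneg (by norm_num) <| sum_nonneg fun x _ => sum_nonneg fun y _ =>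
    mul_nonneg (mul_nonneg (sq_nonneg _) (hμ x)) (hμ y)

theorem dirichletForm_nonneg (hP : ∀ x y, 0 ≤ P x y) (hμ : ∀ x, 0 ≤ μ x) (f : X → ℝ) :
    0 ≤ dirichletForm P μ f :=
  mul_nonneg (by norm_num) <| sum_nonneg fun x _ => sum_nonneg fun y _ =>
    mul_nonneg (mul_nonneg (sq_nonneg _) (hP x y)) (hμ x)

theorem exists_varianceForm_ne_zero [Nontrivial X] (hμ : ∀ x, 0 < μ x) :
    ∃ f, varianceForm μ f ≠ 0 := by
  classical
  obtain ⟨a, b, hab⟩ := exists_pair_ne X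
  refine ⟨fun z => if z = a then 1 else 0, ne_of_gt (mul_pos (by norm_num) ?_)⟩
  refine sum_pos' (fun x _ => sum_nonneg fun y _ => ?_) ⟨a, mem_univ a, ?_⟩
  · exact mul_nonneg (mul_nonneg (sq_nonneg _) (hμ x).le) (hμ y).le
  refine sum_pos' (fun y _ => ?_) ⟨b, mem_univ b, ?_⟩
  · exact mul_nonneg (mul_nonneg (sq_nonneg _) (hμ a).le) (hμ y).le
  simpa [hab.symm] using mul_pos (hμ a) (hμ b)

theorem specGap_of_subsingleton [Subsingleton X] : specGap P μ = 0 := by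
  have hvar : ∀ f : X → ℝ, varianceForm μ f = 0 := fun f => by
    rw [varianceForm, sum_eq_zero fun x _ => sum_eq_zero fun y _ => by
      rw [Subsingleton.elim x y, sub_self, sq, zero_mul, zero_mul, zero_mul], mul_zero]
  simp [specGap_eq_sInf, hvar]

end Forms

theorem varianceForm_le_congestion_mul_dirichletForm [Fintype X] {π : X → ℝ}
    {P : Matrix X X ℝ} {E : Finset (X × X)} {w : X × X → ℝ} {φ : List X → ℝ}
    (hπ : ∀ x, 0 < π x) (hP : ∀ x y, 0 ≤ P x y) (hE : ∀ e ∈ E, 0 < P e.1 e.2)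
    (hw : ∀ e ∈ E, 0 < w e) (hφ : ∀ γ, (∃ x y, IsPathIn E x y γ) → 0 ≤ φ γ)
    (hflow : ∀ x y, x ≠ y → flowBetween E φ x y = π x * π y) (f : X → ℝ) :
    varianceForm π f ≤ congestion π P E w φ * dirichletForm P π f := by
  classical
  set A := congestion π P E w φ
  suffices ∑ x, ∑ y, (f x - f y) ^ 2 * π x * π y ≤
      A * ∑ x, ∑ y, (f x - f y) ^ 2 * P x y * π x by
    unfold varianceForm dirichletForm
    linarith
  calc ∑ x, ∑ y, (f x - f y) ^ 2 * π x * π y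
      ≤ ∑ γ ∈ pathsIn E, ∑ e ∈ (edgeList γ).toFinset,
          (f e.1 - f e.2) ^ 2 / w e * (wlen w γ * φ γ) := sum_sq_mul_le_sum_pathsIn hw hφ hflow f
    _ = ∑ e ∈ E, (f e.1 - f e.2) ^ 2 / w e * edgeLoad E w φ e :=
        sum_pathsIn_sum_edges_eq_sum_edgeLoad _
    _ ≤ ∑ e ∈ E, (f e.1 - f e.2) ^ 2 / w e * (A * (π e.1 * P e.1 e.2 * w e)) :=
        sum_le_sum fun e he => mul_le_mul_of_nonneg_left
          (edgeLoad_le_congestion_mul he (mul_pos (mul_pos (hπ e.1) (hE e he)) (hw e he)))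
          (div_nonneg (sq_nonneg _) (hw e he).le)
    _ = A * ∑ e ∈ E, (f e.1 - f e.2) ^ 2 * P e.1 e.2 * π e.1 := by
        rw [mul_sum]
        refine sum_congr rfl fun e he => ?_
        field_simp [(hw e he).ne']
    _ ≤ A * ∑ x, ∑ y, (f x - f y) ^ 2 * P x y * π x := by
        gcongr
        · exact congestion_nonneg (fun x => (hπ x).le) hP hw hφ
        rw [← Fintype.sum_prod_type']
        exact sum_le_sum_of_subset_of_nonneg (subset_univ E) fun e _ _ =>
          mul_nonneg (mul_nonneg (sq_nonneg _) (hP _ _)) (hπ _).le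

end CanonicalPaths

theorem stmt9_general {X : Type*} [Fintype X]
    (π : X → ℝ) (hπpos : ∀ x, 0 < π x)
    (P : Matrix X X ℝ) (hPnn : ∀ x y, 0 ≤ P x y)
    (E : Finset (X × X)) (hE : ∀ e ∈ E, e.1 ≠ e.2 ∧ 0 < P e.1 e.2)
    (w : X × X → ℝ) (hw : ∀ e ∈ E, 0 < w e)
    (φ : List X → ℝ) (hφnn : ∀ γ, (∃ x y, IsPathIn E x y γ) → 0 ≤ φ γ)
    (hflow : ∀ x y : X, x ≠ y → flowBetween E φ x y = π x * π y) :
    1 / congestion π P E w φ ≤ specGap P π := by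
  rcases subsingleton_or_nontrivial X with hX | hX
  -- on a single point `specGap` is `sInf ∅ = 0` and the congestion vanishes, so `1 / 0 = 0`
  · rw [congestion_eq_zero_of_subsingleton, specGap_of_subsingleton, div_zero]
  obtain ⟨f₀, hf₀⟩ := exists_varianceForm_ne_zero hπpos
  refine le_csInf ⟨_, f₀, hf₀, rfl⟩ ?_
  rintro _ ⟨f, hf, rfl⟩
  exact one_div_le_div_of_le_mul ((varianceForm_nonneg (fun x => (hπpos x).le) f).lt_of_ne' hf)
    (dirichletForm_nonneg hPnn (fun x => (hπpos x).le) f)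
    (varianceForm_le_congestion_mul_dirichletForm hπpos hPnn (fun e he => (hE e he).2) hw hφnn
      hflow f)

theorem stmt9 {X : Type*} [Fintype X] [DecidableEq X]
    (π : X → ℝ) (hπpos : ∀ x, 0 < π x) (hπsum : ∑ x, π x = 1)
    (P : Matrix X X ℝ) (hProw : ∀ x, ∑ y, P x y = 1) (hPnn : ∀ x y, 0 ≤ P x y)
    (hrev : ∀ x y, π x * P x y = π y * P y x)
    (hirr : ∀ x y : X, Relation.ReflTransGen (fun a b => 0 < P a b) x y)
    (haper : ∃ t : ℕ, ∀ x y, 0 < (P ^ t) x y)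
    (E : Finset (X × X)) (hE : ∀ e ∈ E, e.1 ≠ e.2 ∧ 0 < P e.1 e.2)
    (w : X × X → ℝ) (hw : ∀ e ∈ E, 0 < w e)
    (φ : List X → ℝ) (hφnn : ∀ γ, (∃ x y, IsPathIn E x y γ) → 0 ≤ φ γ)
    (hflow : ∀ x y : X, x ≠ y → flowBetween E φ x y = π x * π y) :
    1 / congestion π P E w φ ≤ specGap P π :=
  stmt9_general π hπpos P hPnn E hE w hw φ hφnn hflow
end

section
/- Suppose R > 1 and let S ∈ (1, R]. Then there exists a flow φ : Γ_S → [0,∞) such that (a) Σ_{γ∈Γ_S(x,x')} φ(γ) = π(x)·π(x') for all x ≠ x', and (b) for all x ≠ x' and every edge (z,z') ∈ E_S with z' ∈ N_S(z), Σ over γ ∈ Γ_S(x,x') containing the edge (z,z') of φ(γ) is at most (P(z,z')/P(z, N_S(z)))·π(x)·π(x'), where P(z, N_S(z)) = Σ_{z''∈N_S(z)} P(z,z''). -/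
open Finset

/-!
Since `S ≤ R`, every `x ≠ x*` has a neighbour in `N_S(x)`, and `π` grows along every such step.
Hence the walk that jumps from `z` to `z' ∈ N_S(z)` with probability `P(z,z') / P(z, N_S(z))`
climbs to `x*` and stops there. The flow sends `π(x) π(x')` along the path that follows this
walk from `x` up to `x*` and then the walk from `x'` backwards down to `x'`. The ascending and
descending halves share no edge, so no edge repeats; an ascending edge `(z,z')` is crossed only
in the first half, and at most with the probability `P(z,z') / P(z, N_S(z))` of that step,
because the walk visits `z` at most once.
-/

section

variable {X : Type*}

section EdgeList

@[simp] lemma edgeList_nil : edgeList ([] : List X) = [] := rfl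

@[simp] lemma edgeList_singleton (a : X) : edgeList [a] = [] := rfl

@[simp] lemma edgeList_cons_cons (a b : X) (l : List X) :
    edgeList (a :: b :: l) = (a, b) :: edgeList (b :: l) := rfl

lemma isChain_iff_forall_mem_edgeList {R : X → X → Prop} :
    ∀ {l : List X}, l.IsChain R ↔ ∀ e ∈ edgeList l, R e.1 e.2
  | [] => by simp
  | [a] => by simp
  | a :: b :: l => by simp [isChain_iff_forall_mem_edgeList (l := b :: l)]

lemma fst_mem_of_mem_edgeList {e : X × X} : ∀ {l : List X}, e ∈ edgeList l → e.1 ∈ l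
  | a :: b :: l, h => by
    rcases List.mem_cons.1 h with rfl | h
    · exact List.mem_cons_self
    · exact List.mem_cons_of_mem _ (fst_mem_of_mem_edgeList h)

lemma nodup_edgeList : ∀ {l : List X}, l.Nodup → (edgeList l).Nodup
  | [], _ => List.nodup_nil
  | [_], _ => List.nodup_nil
  | a :: b :: l, h => by
    rw [List.nodup_cons] at h
    exact List.nodup_cons.2 ⟨fun he => h.1 (fst_mem_of_mem_edgeList he), nodup_edgeList h.2⟩

lemma edgeList_append {c : X} : ∀ {l : List X}, l.getLast? = some c →
    ∀ l' : List X, edgeList (l ++ l') = edgeList l ++ edgeList (c :: l')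
  | [a], h, l' => by cases Option.some.inj h; rfl
  | a :: b :: l, h, l' => by
    rw [List.getLast?_cons_cons] at h
    simp [← edgeList_append h l']

end EdgeList

lemma pairwise_of_isChain_lt (f : X → ℝ) {l : List X} (h : l.IsChain fun a b => f a < f b) :
    l.Pairwise fun a b => f a < f b :=
  List.pairwise_map.1 ((List.isChain_map f).2 h).pairwise

lemma nodup_of_isChain_lt (f : X → ℝ) {l : List X} (h : l.IsChain fun a b => f a < f b) :
    l.Nodup :=
  (pairwise_of_isChain_lt f h).imp fun hlt hab => (hab ▸ hlt).false

section JoinRev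

/-- When `l` and `l'` end at the same point, the glued list visits that point once. -/
def joinRev (l l' : List X) : List X := l ++ l'.reverse.tail

variable {c : X} {l l' : List X}

lemma edgeList_joinRev (h : l.getLast? = some c) (h' : l'.getLast? = some c) :
    edgeList (joinRev l l') = edgeList l ++ edgeList l'.reverse := by
  obtain ⟨l₀, rfl⟩ := List.getLast?_eq_some_iff.1 h'
  simp [joinRev, edgeList_append h]

lemma getLast?_joinRev {y : X} {s : List X} (h : l.getLast? = some c)
    (h' : (y :: s).getLast? = some c) : (joinRev l (y :: s)).getLast? = some y := by
  obtain ⟨l₀, hl₀⟩ := List.getLast?_eq_some_iff.1 h'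
  rw [hl₀]
  cases l₀ <;> simp_all [joinRev]

/-- No edge repeats: the edges of the first part go up and those of the second go down. -/
lemma isPathIn_joinRev {E : Finset (X × X)} {R : X → X → Prop}
    (hE : ∀ a b, R a b → (a, b) ∈ E ∧ (b, a) ∈ E) (f : X → ℝ) (hf : ∀ a b, R a b → f a < f b)
    {x y : X} (hxy : x ≠ y) {t s : List X}
    (ht : (x :: t).IsChain R) (hs : (y :: s).IsChain R)
    (htc : (x :: t).getLast? = some c) (hsc : (y :: s).getLast? = some c) :
    IsPathIn E x y (joinRev (x :: t) (y :: s)) := by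
  have hup := isChain_iff_forall_mem_edgeList.1 ht
  have hdown := isChain_iff_forall_mem_edgeList.1 (List.isChain_reverse.2 hs)
  refine ⟨hxy, rfl, getLast?_joinRev htc hsc, ?_, ?_⟩
  · rw [edgeList_joinRev htc hsc]
    rintro e he
    rcases List.mem_append.1 he with he | he
    exacts [(hE _ _ (hup e he)).1, (hE _ _ (hdown e he)).2]
  · rw [edgeList_joinRev htc hsc, List.nodup_append]
    refine ⟨nodup_edgeList ?_, nodup_edgeList ?_, ?_⟩
    · exact nodup_of_isChain_lt f (ht.imp hf)
    · exact List.nodup_reverse.2 (nodup_of_isChain_lt f (hs.imp hf))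
    · rintro e he _ he' rfl
      exact lt_asymm (hf _ _ (hup e he)) (hf _ _ (hdown e he'))

end JoinRev

section FiniteSums

variable [Fintype X]

noncomputable def numAbove (f : X → ℝ) (x : X) : ℕ := #{y | f x < f y}

lemma numAbove_lt_numAbove {f : X → ℝ} {x y : X} (h : f x < f y) :
    numAbove f y < numAbove f x :=
  card_lt_card <| (ssubset_iff_of_subset fun z hz => by
    simp only [mem_filter, mem_univ, true_and] at hz ⊢; exact h.trans hz).2
    ⟨y, by simp [h]⟩

variable [DecidableEq X]

variable (X) in
def listsUpTo : ℕ → Finset (List X)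
  | 0 => {[]}
  | n + 1 => insert [] ((univ ×ˢ listsUpTo n).image fun p => p.1 :: p.2)

lemma sum_listsUpTo_succ {M : Type*} [AddCommMonoid M] (n : ℕ) (F : List X → M) :
    ∑ l ∈ listsUpTo X (n + 1), F l = F [] + ∑ a, ∑ l ∈ listsUpTo X n, F (a :: l) := by
  rw [listsUpTo, sum_insert (by simp), sum_image (by simp), sum_product]

end FiniteSums

section AscendingWalk

variable [DecidableEq X] (next : X → Finset X) (Q : X → X → ℝ)

/-- The probability that the walk jumping from `a` to `b ∈ next a` with probability `Q a b`, and
stopping where `next` is empty, has trajectory `l`. -/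
def walkWeight : List X → ℝ
  | [] => 0
  | [a] => if next a = ∅ then 1 else 0
  | a :: b :: l => (if b ∈ next a then Q a b else 0) * walkWeight (b :: l)

variable {next Q}

lemma walkWeight_nonneg (hQ : ∀ a, ∀ b ∈ next a, 0 ≤ Q a b) :
    ∀ l, 0 ≤ walkWeight next Q l
  | [] => le_rfl
  | [a] => by rw [walkWeight]; split_ifs <;> norm_num
  | a :: b :: l => by
    rw [walkWeight]
    refine mul_nonneg ?_ (walkWeight_nonneg hQ (b :: l))
    split_ifs with hb
    exacts [hQ a b hb, le_rfl]

lemma isChain_of_walkWeight_ne_zero :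
    ∀ {l : List X}, walkWeight next Q l ≠ 0 → l.IsChain fun a b => b ∈ next a
  | [], _ => .nil
  | [a], _ => .singleton a
  | a :: b :: l, h => by
    rw [walkWeight, mul_ne_zero_iff, ne_eq, ite_eq_right_iff, Classical.not_imp] at h
    exact .cons_cons h.1.1 (isChain_of_walkWeight_ne_zero h.2)

lemma getLast?_of_walkWeight_ne_zero :
    ∀ {l : List X}, walkWeight next Q l ≠ 0 → ∀ c ∈ l.getLast?, next c = ∅
  | [a], h, c, hc => by
    simp only [List.getLast?_singleton, Option.mem_def, Option.some.injEq] at hc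
    subst hc
    by_contra hne
    simp [walkWeight, hne] at h
  | a :: b :: l, h, c, hc => by
    rw [walkWeight, mul_ne_zero_iff] at h
    exact getLast?_of_walkWeight_ne_zero h.2 c (by rwa [List.getLast?_cons_cons] at hc)

lemma walkWeight_cons_eq_zero_of_lt {f : X → ℝ} (hf : ∀ a, ∀ b ∈ next a, f a < f b) {a v : X}
    {l : List X} (hv : v ∈ a :: l) (hlt : f v < f a) : walkWeight next Q (a :: l) = 0 := by
  by_contra h
  have hl := pairwise_of_isChain_lt f
    ((isChain_of_walkWeight_ne_zero h).imp fun _ _ => hf _ _)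
  rcases List.mem_cons.1 hv with rfl | hv
  exacts [hlt.false, ((List.pairwise_cons.1 hl).1 v hv).not_gt hlt]

variable [Fintype X]

lemma sum_walkWeight_mul_listsUpTo_succ (n : ℕ) (x : X) (G : List X → ℝ) :
    ∑ l ∈ listsUpTo X (n + 1), walkWeight next Q (x :: l) * G (x :: l) =
      (if next x = ∅ then G [x] else 0) +
        ∑ a ∈ next x,
          Q x a * ∑ l ∈ listsUpTo X n, walkWeight next Q (a :: l) * G (x :: a :: l) := by
  simp only [sum_listsUpTo_succ, walkWeight, ite_mul, one_mul, zero_mul, mul_assoc]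
  rw [← sum_subset (subset_univ (next x)) fun a _ ha => by simp [ha]]
  exact congrArg _ (sum_congr rfl fun a ha => by simp [ha, mul_sum])

lemma sum_walkWeight_eq_one {f : X → ℝ} (hf : ∀ a, ∀ b ∈ next a, f a < f b)
    (hQ : ∀ a, (next a).Nonempty → ∑ b ∈ next a, Q a b = 1) :
    ∀ n (x : X), numAbove f x ≤ n → ∑ l ∈ listsUpTo X n, walkWeight next Q (x :: l) = 1
  | 0, x, hx => by
    have hx0 : next x = ∅ := eq_empty_of_forall_notMem fun b hb => by
      have := numAbove_lt_numAbove (hf x b hb)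
      omega
    simp [listsUpTo, walkWeight, hx0]
  | n + 1, x, hx => by
    have h1 := sum_walkWeight_mul_listsUpTo_succ (next := next) (Q := Q) n x 1
    simp only [Pi.one_apply, mul_one] at h1
    rw [h1]
    rcases (next x).eq_empty_or_nonempty with h | h
    · simp [h]
    rw [if_neg h.ne_empty, zero_add, ← hQ x h]
    refine sum_congr rfl fun a ha => ?_
    have := numAbove_lt_numAbove (hf x a ha)
    rw [sum_walkWeight_eq_one hf hQ n a (by omega), mul_one]

/-- The walk visits `z` at most once. -/
lemma sum_walkWeight_mem_edgeList_le {f : X → ℝ} (hf : ∀ a, ∀ b ∈ next a, f a < f b)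
    (hQ₀ : ∀ a, ∀ b ∈ next a, 0 ≤ Q a b) (hQ : ∀ a, (next a).Nonempty → ∑ b ∈ next a, Q a b = 1)
    {z z' : X} (hz : z' ∈ next z) :
    ∀ n (x : X), numAbove f x ≤ n →
      ∑ l ∈ listsUpTo X n,
        walkWeight next Q (x :: l) * (if (z, z') ∈ edgeList (x :: l) then 1 else 0) ≤ Q z z'
  | 0, x, _ => by simpa [listsUpTo] using hQ₀ z z' hz
  | n + 1, x, hx => by
    rw [sum_walkWeight_mul_listsUpTo_succ n x fun l => if (z, z') ∈ edgeList l then 1 else 0]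
    simp only [edgeList_singleton, List.not_mem_nil, if_false, ite_self, zero_add,
      edgeList_cons_cons, List.mem_cons]
    by_cases hxz : x = z
    · subst hxz
      have hz' := numAbove_lt_numAbove (hf x z' hz)
      rw [sum_eq_single z' ?_ (absurd hz)]
      · simp [sum_walkWeight_eq_one hf hQ n z' (by omega)]
      intro a ha haz
      refine mul_eq_zero_of_right _ (sum_eq_zero fun l _ => ?_)
      simp only [Prod.mk.injEq, true_and, Ne.symm haz, false_or]
      split_ifs with he
      · rw [walkWeight_cons_eq_zero_of_lt hf (fst_mem_of_mem_edgeList he) (hf x a ha), zero_mul]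
      · exact mul_zero _
    calc ∑ a ∈ next x, Q x a * ∑ l ∈ listsUpTo X n, walkWeight next Q (a :: l) *
          (if (z, z') = (x, a) ∨ (z, z') ∈ edgeList (a :: l) then 1 else 0)
        = ∑ a ∈ next x, Q x a * ∑ l ∈ listsUpTo X n, walkWeight next Q (a :: l) *
          (if (z, z') ∈ edgeList (a :: l) then 1 else 0) := by
          simp [Ne.symm hxz]
      _ ≤ ∑ a ∈ next x, Q x a * Q z z' := sum_le_sum fun a ha =>
          mul_le_mul_of_nonneg_left (sum_walkWeight_mem_edgeList_le hf hQ₀ hQ hz n a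
            (by have := numAbove_lt_numAbove (hf x a ha); omega)) (hQ₀ x a ha)
      _ ≤ Q z z' := by
          rw [← sum_mul]
          rcases (next x).eq_empty_or_nonempty with h | h
          · simpa [h] using hQ₀ z z' hz
          · rw [hQ x h, one_mul]

end AscendingWalk

lemma tsum_subtype_sum_ite {α ι : Type*} [DecidableEq α] (p : α → Prop) [DecidablePred p]
    (s : Finset ι) (g : ι → α) (c : ι → ℝ) :
    ∑' a : {a // p a}, ∑ i ∈ s, (if a.1 = g i then c i else 0) =
      ∑ i ∈ s, if p (g i) then c i else 0 := by
  refine (hasSum_sum fun i _ => ?_).tsum_eq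
  by_cases hp : p (g i)
  · convert hasSum_ite_eq (⟨g i, hp⟩ : {a // p a}) (c i) using 2 with a
    · simp [Subtype.ext_iff]
    · simp [hp]
  · simp only [hp, if_false]
    convert hasSum_zero with a
    exact if_neg fun h : a.1 = g i => hp (h ▸ a.2)

section WalkFlow

variable [DecidableEq X] {next : X → Finset X} {Q : X → X → ℝ} {c : X}

lemma getLast?_eq_of_walkWeight_ne_zero (hc : ∀ a, next a = ∅ → a = c) {x : X} {t : List X}
    (h : walkWeight next Q (x :: t) ≠ 0) : (x :: t).getLast? = some c := by
  rw [List.getLast?_cons]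
  exact congrArg some (hc _ (getLast?_of_walkWeight_ne_zero h _ List.getLast?_cons))

lemma isPathIn_joinRev_of_walkWeight_ne_zero {E : Finset (X × X)}
    (hE : ∀ a, ∀ b ∈ next a, (a, b) ∈ E ∧ (b, a) ∈ E) {f : X → ℝ}
    (hf : ∀ a, ∀ b ∈ next a, f a < f b) (hc : ∀ a, next a = ∅ → a = c) {x y : X} (hxy : x ≠ y)
    {t s : List X} (ht : walkWeight next Q (x :: t) ≠ 0) (hs : walkWeight next Q (y :: s) ≠ 0) :
    IsPathIn E x y (joinRev (x :: t) (y :: s)) :=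
  isPathIn_joinRev (fun a b => hE a b) f (fun a b => hf a b) hxy
    (isChain_of_walkWeight_ne_zero ht) (isChain_of_walkWeight_ne_zero hs)
    (getLast?_eq_of_walkWeight_ne_zero hc ht) (getLast?_eq_of_walkWeight_ne_zero hc hs)

lemma mem_edgeList_of_mem_edgeList_joinRev {f : X → ℝ} (hf : ∀ a, ∀ b ∈ next a, f a < f b)
    (hc : ∀ a, next a = ∅ → a = c) {x y : X} {t s : List X}
    (ht : walkWeight next Q (x :: t) ≠ 0) (hs : walkWeight next Q (y :: s) ≠ 0)
    {z z' : X} (hz : z' ∈ next z) (h : (z, z') ∈ edgeList (joinRev (x :: t) (y :: s))) :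
    (z, z') ∈ edgeList (x :: t) := by
  rw [edgeList_joinRev (getLast?_eq_of_walkWeight_ne_zero hc ht)
    (getLast?_eq_of_walkWeight_ne_zero hc hs), List.mem_append] at h
  refine h.resolve_right fun hdown => ?_
  have := isChain_iff_forall_mem_edgeList.1
    (List.isChain_reverse.2 (isChain_of_walkWeight_ne_zero hs)) _ hdown
  exact lt_asymm (hf _ _ hz) (hf _ _ this)

variable [Fintype X] (next Q)

noncomputable def pairFlow (n : ℕ) (x y : X) (γ : List X) : ℝ :=
  ∑ p ∈ listsUpTo X n ×ˢ listsUpTo X n,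
    if γ = joinRev (x :: p.1) (y :: p.2) then
      walkWeight next Q (x :: p.1) * walkWeight next Q (y :: p.2) else 0

noncomputable def walkFlow (w : X → ℝ) (n : ℕ) (γ : List X) : ℝ :=
  ∑ x, ∑ y, w x * w y * pairFlow next Q n x y γ

variable {next Q}

lemma walkFlow_nonneg (hQ₀ : ∀ a, ∀ b ∈ next a, 0 ≤ Q a b) {w : X → ℝ} (hw : ∀ x, 0 ≤ w x)
    (n : ℕ) (γ : List X) : 0 ≤ walkFlow next Q w n γ := by
  unfold walkFlow pairFlow
  exact sum_nonneg fun x _ => sum_nonneg fun y _ => mul_nonneg (mul_nonneg (hw x) (hw y)) <|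
    sum_nonneg fun _ _ => by
      split_ifs
      exacts [mul_nonneg (walkWeight_nonneg hQ₀ _) (walkWeight_nonneg hQ₀ _), le_rfl]

lemma head?_getLast?_of_pairFlow_ne_zero (hc : ∀ a, next a = ∅ → a = c) {n : ℕ} {x y : X}
    {γ : List X} (h : pairFlow next Q n x y γ ≠ 0) :
    γ.head? = some x ∧ γ.getLast? = some y := by
  obtain ⟨p, -, hp⟩ := exists_ne_zero_of_sum_ne_zero h
  rw [ne_eq, ite_eq_right_iff, Classical.not_imp, ← ne_eq, mul_ne_zero_iff] at hp
  obtain ⟨rfl, ht, hs⟩ := hp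
  exact ⟨rfl, getLast?_joinRev (getLast?_eq_of_walkWeight_ne_zero hc ht)
    (getLast?_eq_of_walkWeight_ne_zero hc hs)⟩

lemma walkFlow_eq (hc : ∀ a, next a = ∅ → a = c) (w : X → ℝ) (n : ℕ) {x y : X} {γ : List X}
    (hx : γ.head? = some x) (hy : γ.getLast? = some y) :
    walkFlow next Q w n γ = w x * w y * pairFlow next Q n x y γ := by
  have h0 : ∀ x' y', pairFlow next Q n x' y' γ ≠ 0 → x' = x ∧ y' = y := fun x' y' h => by
    obtain ⟨hx', hy'⟩ := head?_getLast?_of_pairFlow_ne_zero hc h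
    exact ⟨Option.some.inj (hx'.symm.trans hx), Option.some.inj (hy'.symm.trans hy)⟩
  rw [walkFlow, Fintype.sum_eq_single x fun x' hx' => sum_eq_zero fun y' _ => ?_,
    Fintype.sum_eq_single y fun y' hy' => ?_]
  · by_contra h; exact hy' (h0 x y' (right_ne_zero_of_mul h)).2
  · by_contra h; exact hx' (h0 x' y' (right_ne_zero_of_mul h)).1

lemma tsum_pairFlow (n : ℕ) (x y : X) (p : List X → Prop) [DecidablePred p] :
    ∑' γ : {γ // p γ}, pairFlow next Q n x y γ =
      ∑ q ∈ listsUpTo X n ×ˢ listsUpTo X n, if p (joinRev (x :: q.1) (y :: q.2)) then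
        walkWeight next Q (x :: q.1) * walkWeight next Q (y :: q.2) else 0 :=
  tsum_subtype_sum_ite p _ _ _

variable {f : X → ℝ}

theorem flowBetween_walkFlow {E : Finset (X × X)}
    (hE : ∀ a, ∀ b ∈ next a, (a, b) ∈ E ∧ (b, a) ∈ E) (hf : ∀ a, ∀ b ∈ next a, f a < f b)
    (hQ : ∀ a, (next a).Nonempty → ∑ b ∈ next a, Q a b = 1) (hc : ∀ a, next a = ∅ → a = c)
    {n : ℕ} (hn : ∀ x, numAbove f x ≤ n) (w : X → ℝ) {x y : X} (hxy : x ≠ y) :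
    flowBetween E (walkFlow next Q w n) x y = w x * w y := by
  classical
  rw [flowBetween, tsum_congr fun γ => walkFlow_eq hc w n γ.2.2.1 γ.2.2.2.1, tsum_mul_left,
    tsum_pairFlow]
  have hpath : ∀ q : List X × List X,
      (if IsPathIn E x y (joinRev (x :: q.1) (y :: q.2)) then
        walkWeight next Q (x :: q.1) * walkWeight next Q (y :: q.2) else 0) =
      walkWeight next Q (x :: q.1) * walkWeight next Q (y :: q.2) := fun q => by
    refine ite_eq_left_iff.2 fun hq => (by_contra fun h => hq ?_)
    obtain ⟨ht, hs⟩ := mul_ne_zero_iff.1 (Ne.symm h)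
    exact isPathIn_joinRev_of_walkWeight_ne_zero hE hf hc hxy ht hs
  rw [sum_congr rfl fun q _ => hpath q, sum_product]
  dsimp only
  rw [← sum_mul_sum, sum_walkWeight_eq_one hf hQ n x (hn x),
    sum_walkWeight_eq_one hf hQ n y (hn y), mul_one, mul_one]

theorem flowBetweenThrough_walkFlow_le (E : Finset (X × X))
    (hf : ∀ a, ∀ b ∈ next a, f a < f b) (hQ₀ : ∀ a, ∀ b ∈ next a, 0 ≤ Q a b)
    (hQ : ∀ a, (next a).Nonempty → ∑ b ∈ next a, Q a b = 1) (hc : ∀ a, next a = ∅ → a = c)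
    {n : ℕ} (hn : ∀ x, numAbove f x ≤ n) {w : X → ℝ} (hw : ∀ x, 0 ≤ w x) (x y : X)
    {z z' : X} (hz : z' ∈ next z) :
    flowBetweenThrough E (walkFlow next Q w n) x y (z, z') ≤ Q z z' * (w x * w y) := by
  classical
  rw [flowBetweenThrough, tsum_congr fun γ => walkFlow_eq hc w n γ.2.1.2.1 γ.2.1.2.2.1,
    tsum_mul_left, tsum_pairFlow, mul_comm]
  refine mul_le_mul_of_nonneg_right ?_ (mul_nonneg (hw x) (hw y))
  calc _ ≤ ∑ q ∈ listsUpTo X n ×ˢ listsUpTo X n,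
        walkWeight next Q (x :: q.1) * (if (z, z') ∈ edgeList (x :: q.1) then 1 else 0) *
          walkWeight next Q (y :: q.2) := sum_le_sum fun q _ => ?_
    _ = (∑ t ∈ listsUpTo X n,
          walkWeight next Q (x :: t) * (if (z, z') ∈ edgeList (x :: t) then 1 else 0)) *
        ∑ s ∈ listsUpTo X n, walkWeight next Q (y :: s) := by rw [sum_product, sum_mul_sum]
    _ ≤ Q z z' := by
      rw [sum_walkWeight_eq_one hf hQ n y (hn y), mul_one]
      exact sum_walkWeight_mem_edgeList_le hf hQ₀ hQ hz n x (hn x)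
  have ht₀ := walkWeight_nonneg hQ₀ (x :: q.1)
  have hs₀ := walkWeight_nonneg hQ₀ (y :: q.2)
  rcases eq_or_ne (walkWeight next Q (x :: q.1)) 0 with ht | ht
  · simp [ht]
  rcases eq_or_ne (walkWeight next Q (y :: q.2)) 0 with hs | hs
  · simp [hs]
  split_ifs with h₁ h₂
  · simp
  · exact absurd (mem_edgeList_of_mem_edgeList_joinRev hf hc ht hs hz h₁.2) h₂
  all_goals positivity

end WalkFlow

section Metropolis

variable [Fintype X] {π : X → ℝ} {N : X → Finset X} {S : ℝ}

lemma lt_of_mem_NS (hπ : ∀ x, 0 < π x) (hS : 1 < S) {x y : X} (h : y ∈ NS π N S x) :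
    π x < π y :=
  (one_lt_div (hπ x)).1 (hS.trans_le (mem_filter.1 h).2)

lemma NS_nonempty_of_le_Rval {xstar x : X} (hS : 0 < S) (hSR : S ≤ Rval π N xstar)
    (hx : x ≠ xstar) : (NS π N S x).Nonempty := by
  set D := (fun y => π y / π x) '' (N x : Set X)
  have hSD : S ≤ sSup D := hSR.trans (csInf_le (Set.toFinite _).bddBelow ⟨x, hx, rfl⟩)
  have hD : D.Nonempty := by
    by_contra h
    rw [Set.not_nonempty_iff_eq_empty.1 h, Real.sSup_empty] at hSD
    exact hSD.not_gt hS
  obtain ⟨y, hy, hyD⟩ := hD.csSup_mem (Set.toFinite _)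
  exact ⟨y, mem_filter.2 ⟨hy, hSD.trans_eq hyD.symm⟩⟩

end Metropolis

end

theorem stmt10_general {X : Type*} [Fintype X] [DecidableEq X]
    (π : X → ℝ) (hπpos : ∀ x, 0 < π x)
    (N : X → Finset X)
    (xstar : X)
    (P : Matrix X X ℝ)
    (hsupp : ∀ x y : X, (y ≠ x ∧ 0 < P x y) ↔ y ∈ N x)
    (S : ℝ) (hS1 : 1 < S) (hSR : S ≤ Rval π N xstar) :
    ∃ φ : List X → ℝ, (∀ γ, 0 ≤ φ γ) ∧
      (∀ x y : X, x ≠ y → flowBetween (ES π N S) φ x y = π x * π y) ∧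
      (∀ x y : X, x ≠ y → ∀ z z' : X, (z, z') ∈ ES π N S → z' ∈ NS π N S z →
        flowBetweenThrough (ES π N S) φ x y (z, z') ≤
          P z z' / (∑ u ∈ NS π N S z, P z u) * (π x * π y)) := by
  have hup : ∀ a, ∀ b ∈ NS π N S a, π a < π b := fun a b => lt_of_mem_NS hπpos hS1
  have hP : ∀ a, ∀ b ∈ NS π N S a, 0 < P a b := fun a b hb =>
    ((hsupp a b).2 (mem_filter.1 hb).1).2
  have hQ₀ : ∀ a, ∀ b ∈ NS π N S a, 0 ≤ P a b / ∑ u ∈ NS π N S a, P a u := fun a b hb =>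
    div_nonneg (hP a b hb).le (sum_nonneg fun u hu => (hP a u hu).le)
  have hQ : ∀ a, (NS π N S a).Nonempty → ∑ b ∈ NS π N S a, P a b / ∑ u ∈ NS π N S a, P a u = 1 :=
    fun a ha => by rw [← sum_div, div_self (sum_pos (hP a) ha).ne']
  have hc : ∀ a, NS π N S a = ∅ → a = xstar := fun a ha => by_contra fun hne =>
    (NS_nonempty_of_le_Rval (zero_lt_one.trans hS1) hSR hne).ne_empty ha
  have hE : ∀ a, ∀ b ∈ NS π N S a, (a, b) ∈ ES π N S ∧ (b, a) ∈ ES π N S := fun a b hb =>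
    ⟨by simp [ES, hb], by simp [ES, hb]⟩
  have hn : ∀ x, numAbove π x ≤ Fintype.card X := fun x => card_le_univ _
  refine ⟨walkFlow (NS π N S) (fun a b => P a b / ∑ u ∈ NS π N S a, P a u) π (Fintype.card X),
    walkFlow_nonneg hQ₀ (fun x => (hπpos x).le) _, fun x y hxy => ?_,
    fun x y _ z z' _ hz => ?_⟩
  · exact flowBetween_walkFlow hE hup hQ hc hn π hxy
  · exact flowBetweenThrough_walkFlow_le _ hup hQ₀ hQ hc hn (fun x => (hπpos x).le) x y hz

theorem stmt10 {X : Type*} [Fintype X] [DecidableEq X]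
    (π : X → ℝ) (hπpos : ∀ x, 0 < π x) (hπsum : ∑ x, π x = 1)
    (N : X → Finset X)
    (hNirr : ∀ x, x ∉ N x)
    (hNsym : ∀ x y, y ∈ N x → x ∈ N y)
    (hNconn : ∀ x y : X, Relation.ReflTransGen (fun a b => b ∈ N a) x y)
    (xstar : X) (hxstar : ∀ x, π x ≤ π xstar)
    (P : Matrix X X ℝ) (hProw : ∀ x, ∑ y, P x y = 1) (hPnn : ∀ x y, 0 ≤ P x y)
    (hsupp : ∀ x y : X, (y ≠ x ∧ 0 < P x y) ↔ y ∈ N x)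
    (hR : 1 < Rval π N xstar)
    (S : ℝ) (hS1 : 1 < S) (hSR : S ≤ Rval π N xstar) :
    ∃ φ : List X → ℝ, (∀ γ, 0 ≤ φ γ) ∧
      (∀ x y : X, x ≠ y → flowBetween (ES π N S) φ x y = π x * π y) ∧
      (∀ x y : X, x ≠ y → ∀ z z' : X, (z, z') ∈ ES π N S → z' ∈ NS π N S z →
        flowBetweenThrough (ES π N S) φ x y (z, z') ≤
          P z z' / (∑ u ∈ NS π N S z, P z u) * (π x * π y)) :=
  stmt10_general π hπpos N xstar P hsupp S hS1 hSR
end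

section
/- Let P be a transition matrix on a finite set X with stationary distribution π (π(x) > 0 for all x), reversible with respect to π, and suppose the symmetric matrix S(x,y) = √(π(x)/π(y))·P(x,y) is positive semidefinite (equivalently, P has nonnegative eigenvalues). Suppose there exist x* ∈ X, a function V : X → [1,∞), and a constant α ∈ (0,1) such that (PV)(x) ≤ α·V(x) for all x ∈ X ∖ {x*}, where (PV)(x) = Σ_{x'} P(x,x')·V(x'). Then for all t ≥ 0 and all x ∈ X, ‖P^t(x,·) − π‖_TV ≤ 2·V(x)·α^{t+1}; consequently, for every ε ∈ (0,1/2), τ_x(P,ε) ≤ (1/(1−α))·log(2·V(x)/ε). -/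
/-
Write `a` for `xstar`, `D` for `diagonal π` and `Q` for `P` with the row and column of `a` set to
zero. Positive semidefiniteness of `S` means that `D * P` is positive semidefinite, so `P` and `Q`
are self-adjoint and nonnegative on `L²(π)`. The drift condition and the Schur test with weight `V`
give `Q ≤ α` on `L²(π)`, and Cauchy–Schwarz for the form `⟪·, Q ·⟫_π` upgrades this to
`⟪f, Q^(t+1) f⟫_π ≤ α ⟪f, Q^t f⟫_π`. For `f = 1_{X∖{a}}` this is
`∑_{y ≠ a} π(y) P_y(τ_a > t) ≤ α^t (1 - π(a)) ≤ α^(t+1)`.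

By reversibility `π(a) P^t(a,y) = π(y) P^t(y,a)`, and first-step analysis together with
`P^s(a,a) ≥ π(a)` gives `P^t(y,a) ≥ π(a) P_y(τ_a ≤ t)`. Hence
`π(A) - P^t(a,A) ≤ ∑_{y ≠ a} π(y) P_y(τ_a > t)`, which yields `|P^t(a,A) - π(A)| ≤ α^(t+1)`.
From any other starting point, one step of the chain and the drift inequality propagate the bound
`α^(t+1) V` by induction on `t`. The mixing-time bound follows from `α ≤ exp (α - 1)`.
-/

open Finset

open Matrix

section SelfAdjoint

variable {X : Type*} [Fintype X]

lemma Matrix.IsHermitian.vecMul_eq_mulVec {M : Matrix X X ℝ} (hM : M.IsHermitian) (x : X → ℝ) :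
    x ᵥ* M = M *ᵥ x := by
  rw [← vecMul_transpose, ← conjTranspose_eq_transpose_of_trivial, hM.eq]

lemma Matrix.IsHermitian.dotProduct_mulVec_comm {M : Matrix X X ℝ} (hM : M.IsHermitian)
    (x y : X → ℝ) : x ⬝ᵥ M *ᵥ y = y ⬝ᵥ M *ᵥ x := by
  rw [dotProduct_mulVec, hM.vecMul_eq_mulVec, dotProduct_comm]

lemma Matrix.PosSemidef.dotProduct_mulVec_sq_le {M : Matrix X X ℝ} (hM : M.PosSemidef)
    (x y : X → ℝ) : (x ⬝ᵥ M *ᵥ y) ^ 2 ≤ (x ⬝ᵥ M *ᵥ x) * (y ⬝ᵥ M *ᵥ y) := by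
  have hquad : ∀ s : ℝ,
      0 ≤ (y ⬝ᵥ M *ᵥ y) * (s * s) + 2 * (x ⬝ᵥ M *ᵥ y) * s + x ⬝ᵥ M *ᵥ x := by
    intro s
    have h := hM.dotProduct_mulVec_nonneg (x + s • y)
    simp only [star_trivial, mulVec_add, mulVec_smul, dotProduct_add, add_dotProduct,
      dotProduct_smul, smul_dotProduct, smul_eq_mul, hM.isHermitian.dotProduct_mulVec_comm y x]
      at h
    linarith
  have := discrim_le_zero hquad
  rw [discrim] at this
  nlinarith

lemma sum_sum_mul_mul_le_sum_sum_mul_sq {w : X → X → ℝ} (hw : ∀ i j, w i j = w j i)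
    (hw0 : ∀ i j, 0 ≤ w i j) (y : X → ℝ) :
    ∑ i, ∑ j, w i j * (y i * y j) ≤ ∑ i, ∑ j, w i j * y i ^ 2 := by
  have hswap : ∑ i, ∑ j, w i j * y j ^ 2 = ∑ i, ∑ j, w i j * y i ^ 2 := by
    rw [sum_comm]
    simp_rw [hw]
  have hamgm : ∑ i, ∑ j, w i j * (y i * y j)
      ≤ ∑ i, ∑ j, (w i j * y i ^ 2 + w i j * y j ^ 2) / 2 := by
    gcongr with i _ j _
    nlinarith [mul_nonneg (hw0 i j) (sq_nonneg (y i - y j))]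
  simp only [← sum_div, sum_add_distrib, hswap] at hamgm
  linarith

end SelfAdjoint

section WeightedForm

variable {X : Type*} [Fintype X] [DecidableEq X] {π : X → ℝ} {T : Matrix X X ℝ} {α : ℝ}

lemma semiconjBy_diagonal_of_isHermitian (hT : (diagonal π * T).IsHermitian) :
    SemiconjBy (diagonal π) T Tᵀ := by
  have h := hT.eq
  rw [conjTranspose_eq_transpose_of_trivial, transpose_mul, diagonal_transpose] at h
  exact h.symm

lemma posSemidef_diagonal_mul_of_posSemidef_sqrt (hπ : ∀ x, 0 < π x)
    (h : (Matrix.of fun x y => Real.sqrt (π x / π y) * T x y).PosSemidef) :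
    (diagonal π * T).PosSemidef := by
  have key : diagonal π * T = (diagonal fun x => Real.sqrt (π x))ᴴ
      * (Matrix.of fun x y => Real.sqrt (π x / π y) * T x y)
      * diagonal fun x => Real.sqrt (π x) := by
    ext x y
    have hy := Real.sqrt_pos.2 (hπ y)
    simp only [diagonal_mul, mul_diagonal, diagonal_conjTranspose, star_trivial, of_apply,
      Real.sqrt_div (hπ x).le]
    field_simp
    rw [Real.sq_sqrt (hπ x).le]
    ring
  rw [key]
  exact h.conjTranspose_mul_mul_same _

lemma dotProduct_diagonal_mul_pow_add_mulVec (hT : SemiconjBy (diagonal π) T Tᵀ) (m n : ℕ)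
    (x y : X → ℝ) :
    x ⬝ᵥ (diagonal π * T ^ (m + n)) *ᵥ y = (T ^ m *ᵥ x) ⬝ᵥ (diagonal π * T ^ n) *ᵥ y := by
  rw [pow_add, ← mul_assoc, (hT.pow_right m).eq, ← transpose_pow, mul_assoc, ← mulVec_mulVec,
    dotProduct_mulVec, vecMul_transpose]

lemma posSemidef_diagonal_mul_pow (hπ : 0 ≤ π) (hT : (diagonal π * T).PosSemidef) (n : ℕ) :
    (diagonal π * T ^ n).PosSemidef := by
  have hs := semiconjBy_diagonal_of_isHermitian hT.isHermitian
  have key : ∀ m k, diagonal π * T ^ (m + k + m) = (T ^ m)ᴴ * (diagonal π * T ^ k) * T ^ m := by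
    intro m k
    rw [conjTranspose_eq_transpose_of_trivial, transpose_pow, pow_add, pow_add, ← mul_assoc,
      ← mul_assoc, (hs.pow_right m).eq]
    simp only [mul_assoc]
  obtain ⟨m, rfl | rfl⟩ := Nat.even_or_odd' n
  · rw [show 2 * m = m + 0 + m by ring, key, pow_zero, mul_one]
    exact (PosSemidef.diagonal hπ).conjTranspose_mul_mul_same _
  · rw [show 2 * m + 1 = m + 1 + m by ring, key, pow_one]
    exact hT.conjTranspose_mul_mul_same _

/-- Schur test with the weight `V`. -/
lemma dotProduct_diagonal_mul_mulVec_le (hπ : 0 ≤ π) (hT : SemiconjBy (diagonal π) T Tᵀ)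
    (hT0 : ∀ i j, 0 ≤ T i j) {V : X → ℝ} (hV : ∀ i, 0 < V i) (hTV : T *ᵥ V ≤ α • V)
    (x : X → ℝ) : x ⬝ᵥ (diagonal π * T) *ᵥ x ≤ α * (x ⬝ᵥ diagonal π *ᵥ x) := by
  have hsym : ∀ i j, π i * T i j = π j * T j i := fun i j => by
    simpa [diagonal_mul, mul_diagonal, mul_comm] using congrFun (congrFun hT.eq i) j
  set w : X → X → ℝ := fun i j => π i * T i j * V i * V j
  have hw : ∀ i j, w i j = w j i := fun i j => by simp only [w, hsym i j]; ring
  have hw0 : ∀ i j, 0 ≤ w i j := fun i j =>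
    mul_nonneg (mul_nonneg (mul_nonneg (hπ i) (hT0 i j)) (hV i).le) (hV j).le
  have hx : ∀ i, x i = V i * (x i / V i) := fun i => by field_simp [(hV i).ne']
  calc x ⬝ᵥ (diagonal π * T) *ᵥ x
      = ∑ i, ∑ j, w i j * ((x i / V i) * (x j / V j)) := by
        simp only [dotProduct, mulVec, diagonal_mul, mul_sum]
        refine sum_congr rfl fun i _ => sum_congr rfl fun j _ => ?_
        rw [hx i, hx j]
        simp only [w]
        field_simp [(hV i).ne', (hV j).ne']
    _ ≤ ∑ i, ∑ j, w i j * (x i / V i) ^ 2 := sum_sum_mul_mul_le_sum_sum_mul_sq hw hw0 _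
    _ = ∑ i, π i * x i ^ 2 / V i * (T *ᵥ V) i := by
        simp only [mulVec, dotProduct, mul_sum]
        refine sum_congr rfl fun i _ => sum_congr rfl fun j _ => ?_
        simp only [w]
        field_simp [(hV i).ne']
    _ ≤ ∑ i, π i * x i ^ 2 / V i * (α * V i) := by
        gcongr with i
        · exact div_nonneg (mul_nonneg (hπ i) (sq_nonneg _)) (hV i).le
        · exact hTV i
    _ = α * (x ⬝ᵥ diagonal π *ᵥ x) := by
        simp only [dotProduct, mulVec_diagonal, mul_sum]
        refine sum_congr rfl fun i _ => ?_
        field_simp [(hV i).ne']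

lemma dotProduct_diagonal_mul_sq_mulVec_le (hπ : 0 ≤ π) (hT : (diagonal π * T).PosSemidef)
    (hα : 0 ≤ α) (hle : ∀ x, x ⬝ᵥ (diagonal π * T) *ᵥ x ≤ α * (x ⬝ᵥ diagonal π *ᵥ x))
    (x : X → ℝ) :
    x ⬝ᵥ (diagonal π * T ^ 2) *ᵥ x ≤ α * (x ⬝ᵥ (diagonal π * T) *ᵥ x) := by
  have hs := semiconjBy_diagonal_of_isHermitian hT.isHermitian
  set y := T *ᵥ x
  -- `⟪x, T² x⟫_π = ⟪y, y⟫_π = ⟪y, T x⟫_π`, so Cauchy–Schwarz for `⟪·, T ·⟫_π` and `hle y` give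
  -- `⟪y, y⟫_π ^ 2 ≤ ⟪y, T y⟫_π ⟪x, T x⟫_π ≤ α ⟪y, y⟫_π ⟪x, T x⟫_π`.
  have hA : x ⬝ᵥ (diagonal π * T ^ 2) *ᵥ x = y ⬝ᵥ (diagonal π * T) *ᵥ x := by
    simpa using dotProduct_diagonal_mul_pow_add_mulVec hs 1 1 x x
  have hA' : y ⬝ᵥ (diagonal π * T) *ᵥ x = y ⬝ᵥ diagonal π *ᵥ y := by
    rw [← mulVec_mulVec]
  have hA0 : 0 ≤ y ⬝ᵥ diagonal π *ᵥ y := by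
    simpa using (PosSemidef.diagonal hπ).dotProduct_mulVec_nonneg y
  have hx0 : 0 ≤ x ⬝ᵥ (diagonal π * T) *ᵥ x := by
    simpa using hT.dotProduct_mulVec_nonneg x
  have hcs := hT.dotProduct_mulVec_sq_le y x
  have hy := hle y
  rw [hA, hA']
  rw [hA'] at hcs
  nlinarith [mul_nonneg hα hx0]

lemma dotProduct_diagonal_mul_pow_succ_mulVec_le (hπ : 0 ≤ π)
    (hT : (diagonal π * T).PosSemidef) (hα : 0 ≤ α)
    (hle : ∀ x, x ⬝ᵥ (diagonal π * T) *ᵥ x ≤ α * (x ⬝ᵥ diagonal π *ᵥ x)) (n : ℕ) (x : X → ℝ) :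
    x ⬝ᵥ (diagonal π * T ^ (n + 1)) *ᵥ x ≤ α * (x ⬝ᵥ (diagonal π * T ^ n) *ᵥ x) := by
  have hs := semiconjBy_diagonal_of_isHermitian hT.isHermitian
  have hshift : ∀ m k, x ⬝ᵥ (diagonal π * T ^ (m + k + m)) *ᵥ x
      = (T ^ m *ᵥ x) ⬝ᵥ (diagonal π * T ^ k) *ᵥ (T ^ m *ᵥ x) := fun m k => by
    rw [add_assoc, dotProduct_diagonal_mul_pow_add_mulVec hs, pow_add, ← mul_assoc,
      ← mulVec_mulVec]
  obtain ⟨m, rfl | rfl⟩ := Nat.even_or_odd' n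
  · rw [show 2 * m + 1 = m + 1 + m by ring, show 2 * m = m + 0 + m by ring, hshift, hshift]
    simpa only [pow_one, pow_zero, mul_one] using hle _
  · rw [show 2 * m + 1 + 1 = m + 2 + m by ring, show 2 * m + 1 = m + 1 + m by ring, hshift,
      hshift, pow_one]
    exact dotProduct_diagonal_mul_sq_mulVec_le hπ hT hα hle _

lemma dotProduct_diagonal_mul_pow_mulVec_le (hπ : 0 ≤ π) (hT : (diagonal π * T).PosSemidef)
    (hα : 0 ≤ α) (hle : ∀ x, x ⬝ᵥ (diagonal π * T) *ᵥ x ≤ α * (x ⬝ᵥ diagonal π *ᵥ x))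
    (n : ℕ) (x : X → ℝ) :
    x ⬝ᵥ (diagonal π * T ^ n) *ᵥ x ≤ α ^ n * (x ⬝ᵥ diagonal π *ᵥ x) := by
  induction n with
  | zero => simp
  | succ n ih =>
    calc x ⬝ᵥ (diagonal π * T ^ (n + 1)) *ᵥ x ≤ α * (x ⬝ᵥ (diagonal π * T ^ n) *ᵥ x) :=
          dotProduct_diagonal_mul_pow_succ_mulVec_le hπ hT hα hle n x
      _ ≤ α * (α ^ n * (x ⬝ᵥ diagonal π *ᵥ x)) := mul_le_mul_of_nonneg_left ih hα
      _ = α ^ (n + 1) * (x ⬝ᵥ diagonal π *ᵥ x) := by ring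

lemma diagonal_mul_mulVec_one (hT : T *ᵥ 1 = 1) : (diagonal π * T) *ᵥ 1 = π := by
  rw [← mulVec_mulVec, hT]; ext x; simp [mulVec_diagonal]

lemma le_apply_self_of_posSemidef (hπ1 : ∑ x, π x = 1) (hT : T *ᵥ 1 = 1)
    (hM : (diagonal π * T).PosSemidef) {a : X} (ha : 0 < π a) : π a ≤ T a a := by
  have hcs := hM.dotProduct_mulVec_sq_le 1 (Pi.single a 1)
  rw [hM.isHermitian.dotProduct_mulVec_comm 1, diagonal_mul_mulVec_one hT] at hcs
  simp [one_dotProduct, hπ1, single_dotProduct, diagonal_mul] at hcs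
  nlinarith

end WeightedForm

section Taboo

variable {X : Type*} [DecidableEq X]

def indicatorCompl (a : X) : X → ℝ := 1 - Pi.single a 1

lemma indicatorCompl_apply (a x : X) : indicatorCompl a x = if x = a then 0 else 1 := by
  by_cases h : x = a <;> simp [indicatorCompl, h]

lemma indicatorCompl_nonneg (a x : X) : 0 ≤ indicatorCompl a x := by
  rw [indicatorCompl_apply]; split_ifs <;> norm_num

variable [Fintype X]

lemma diagonal_indicatorCompl_mulVec_self (a : X) :
    diagonal (indicatorCompl a) *ᵥ indicatorCompl a = indicatorCompl a := by
  ext x; rw [mulVec_diagonal, indicatorCompl_apply]; split_ifs <;> norm_num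

lemma indicatorCompl_vecMul_diagonal_self (a : X) :
    indicatorCompl a ᵥ* diagonal (indicatorCompl a) = indicatorCompl a := by
  rw [← diagonal_transpose, vecMul_transpose, diagonal_indicatorCompl_mulVec_self]

lemma indicatorCompl_dotProduct_diagonal_mul_mulVec {π : X → ℝ} (hπ1 : ∑ x, π x = 1)
    {T : Matrix X X ℝ} (hT : T *ᵥ 1 = 1) (hM : (diagonal π * T).IsHermitian) (a : X) :
    indicatorCompl a ⬝ᵥ (diagonal π * T) *ᵥ indicatorCompl a = 1 - 2 * π a + π a * T a a := by
  simp only [indicatorCompl, mulVec_sub, dotProduct_sub, sub_dotProduct,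
    hM.dotProduct_mulVec_comm 1 (Pi.single a 1), diagonal_mul_mulVec_one hT]
  simp [one_dotProduct, hπ1, single_dotProduct, diagonal_mul]
  ring

/-- `(taboo P a ^ t *ᵥ indicatorCompl a) y` is the probability that the chain started at `y ≠ a`
stays away from `a` up to time `t`. -/
def taboo (P : Matrix X X ℝ) (a : X) : Matrix X X ℝ :=
  diagonal (indicatorCompl a) * P * diagonal (indicatorCompl a)

variable {P : Matrix X X ℝ} {a : X}

lemma taboo_apply (x y : X) : taboo P a x y = indicatorCompl a x * P x y * indicatorCompl a y := by
  simp [taboo, diagonal_mul, mul_diagonal]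

lemma taboo_apply_nonneg (hP : ∀ x y, 0 ≤ P x y) (x y : X) : 0 ≤ taboo P a x y := by
  rw [taboo_apply]
  exact mul_nonneg (mul_nonneg (indicatorCompl_nonneg a x) (hP x y)) (indicatorCompl_nonneg a y)

lemma taboo_pow_mulVec_nonneg (hP : ∀ x y, 0 ≤ P x y) (t : ℕ) :
    0 ≤ taboo P a ^ t *ᵥ indicatorCompl a := by
  induction t with
  | zero => exact fun x => by simpa using indicatorCompl_nonneg a x
  | succ t ih =>
    intro x
    rw [pow_succ', ← mulVec_mulVec]
    exact sum_nonneg fun y _ => mul_nonneg (taboo_apply_nonneg hP x y) (ih y)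

lemma taboo_mulVec_le (hP : ∀ x y, 0 ≤ P x y) {V : X → ℝ} (hV : ∀ x, 0 ≤ V x) {α : ℝ}
    (hα : 0 ≤ α) (hdrift : ∀ x, x ≠ a → ∑ y, P x y * V y ≤ α * V x) :
    taboo P a *ᵥ V ≤ α • V := by
  intro x
  by_cases hx : x = a
  · subst hx
    simpa [mulVec, dotProduct, taboo_apply, indicatorCompl_apply] using mul_nonneg hα (hV x)
  · calc (taboo P a *ᵥ V) x = ∑ y, P x y * (indicatorCompl a y * V y) :=
          sum_congr rfl fun y _ => by
            change taboo P a x y * V y = _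
            rw [taboo_apply, indicatorCompl_apply a x, if_neg hx]; ring
      _ ≤ ∑ y, P x y * V y := by
          gcongr with y
          · exact hP x y
          · rw [indicatorCompl_apply]; split_ifs <;> linarith [hV y]
      _ ≤ α * V x := hdrift x hx

lemma diagonal_mul_taboo (π : X → ℝ) :
    diagonal π * taboo P a
      = diagonal (indicatorCompl a) * (diagonal π * P) * diagonal (indicatorCompl a) := by
  ext x y
  simp [taboo, diagonal_mul, mul_diagonal]
  ring

lemma posSemidef_diagonal_mul_taboo {π : X → ℝ} (hP : (diagonal π * P).PosSemidef) :
    (diagonal π * taboo P a).PosSemidef := by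
  simpa [diagonal_mul_taboo] using hP.conjTranspose_mul_mul_same (diagonal (indicatorCompl a))

lemma indicatorCompl_dotProduct_diagonal_mul_taboo_mulVec (π : X → ℝ) :
    indicatorCompl a ⬝ᵥ (diagonal π * taboo P a) *ᵥ indicatorCompl a
      = indicatorCompl a ⬝ᵥ (diagonal π * P) *ᵥ indicatorCompl a := by
  rw [diagonal_mul_taboo, ← mulVec_mulVec, ← mulVec_mulVec, diagonal_indicatorCompl_mulVec_self,
    dotProduct_mulVec, indicatorCompl_vecMul_diagonal_self]

end Taboo

section ReversibleChain

variable {X : Type*} [Fintype X] [DecidableEq X] {π : X → ℝ} {P : Matrix X X ℝ} {a : X}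

lemma le_pow_apply_add_mul_taboo_pow_mulVec (hP : P ∈ rowStochastic ℝ X) {c : ℝ}
    (hc : ∀ t, c ≤ (P ^ t) a a) (t : ℕ) :
    ∀ y, y ≠ a → c ≤ (P ^ t) y a + c * (taboo P a ^ t *ᵥ indicatorCompl a) y := by
  induction t with
  | zero => intro y hy; simp [one_apply_ne hy, indicatorCompl_apply, hy]
  | succ t ih =>
    intro y hy
    set q := taboo P a ^ t *ᵥ indicatorCompl a
    have hq : (taboo P a ^ (t + 1) *ᵥ indicatorCompl a) y
        = ∑ z, P y z * (indicatorCompl a z * q z) := by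
      rw [pow_succ', ← mulVec_mulVec]
      refine sum_congr rfl fun z _ => ?_
      change taboo P a y z * q z = _
      rw [taboo_apply, indicatorCompl_apply a y, if_neg hy]
      ring
    have hterm : ∀ z, c ≤ (P ^ t) z a + c * (indicatorCompl a z * q z) := fun z => by
      by_cases hz : z = a
      · subst hz; simpa [indicatorCompl_apply] using hc t
      · simpa [indicatorCompl_apply, hz] using ih z hz
    calc c = ∑ z, P y z * c := by rw [← sum_mul, sum_row_of_mem_rowStochastic hP, one_mul]
      _ ≤ ∑ z, P y z * ((P ^ t) z a + c * (indicatorCompl a z * q z)) :=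
          sum_le_sum fun z _ =>
            mul_le_mul_of_nonneg_left (hterm z) (nonneg_of_mem_rowStochastic hP)
      _ = (P ^ (t + 1)) y a + c * (taboo P a ^ (t + 1) *ᵥ indicatorCompl a) y := by
          rw [hq, pow_succ', mul_apply, mul_sum, ← sum_add_distrib]
          exact sum_congr rfl fun z _ => by ring

lemma sum_sub_sum_pow_apply_le (hπ : ∀ x, 0 < π x) (hP : P ∈ rowStochastic ℝ X)
    (hM : (diagonal π * P).PosSemidef) (hdiag : ∀ t, π a ≤ (P ^ t) a a) (t : ℕ)
    (A : Finset X) :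
    ∑ y ∈ A, π y - ∑ y ∈ A, (P ^ t) a y
      ≤ indicatorCompl a ⬝ᵥ (diagonal π * taboo P a ^ t) *ᵥ indicatorCompl a := by
  have hs := (semiconjBy_diagonal_of_isHermitian hM.isHermitian).pow_right t
  have hrev : ∀ y, π a * (P ^ t) a y = π y * (P ^ t) y a := fun y => by
    simpa [diagonal_mul, mul_diagonal, ← transpose_pow, mul_comm] using
      congrFun (congrFun hs.eq a) y
  set q := taboo P a ^ t *ᵥ indicatorCompl a
  have hq : 0 ≤ q := taboo_pow_mulVec_nonneg (fun _ _ => nonneg_of_mem_rowStochastic hP) t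
  have hterm : ∀ y, π y - (P ^ t) a y ≤ π y * (indicatorCompl a y * q y) := fun y => by
    by_cases hy : y = a
    · subst hy; simpa [indicatorCompl_apply] using hdiag t
    · have h := le_pow_apply_add_mul_taboo_pow_mulVec hP hdiag t y hy
      simp only [indicatorCompl_apply, if_neg hy, one_mul]
      refine le_of_mul_le_mul_left ?_ (hπ a)
      nlinarith [hrev y, mul_le_mul_of_nonneg_left h (hπ y).le]
  calc ∑ y ∈ A, π y - ∑ y ∈ A, (P ^ t) a y
      ≤ ∑ y ∈ A, π y * (indicatorCompl a y * q y) := by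
        rw [← sum_sub_distrib]; exact sum_le_sum fun y _ => hterm y
    _ ≤ ∑ y, π y * (indicatorCompl a y * q y) :=
        sum_le_sum_of_subset_of_nonneg (subset_univ A) fun y _ _ =>
          mul_nonneg (hπ y).le (mul_nonneg (indicatorCompl_nonneg a y) (hq y))
    _ = indicatorCompl a ⬝ᵥ (diagonal π * taboo P a ^ t) *ᵥ indicatorCompl a := by
        rw [← mulVec_mulVec, dotProduct]
        exact sum_congr rfl fun y _ => by rw [mulVec_diagonal]; ring

lemma indicatorCompl_dotProduct_diagonal_mul_taboo_pow_mulVec_le (hπ : ∀ x, 0 < π x)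
    (hπ1 : ∑ x, π x = 1) (hP : P ∈ rowStochastic ℝ X) (hM : (diagonal π * P).PosSemidef)
    {V : X → ℝ} (hV : ∀ x, 0 < V x) {α : ℝ} (hα : 0 ≤ α)
    (hdrift : ∀ x, x ≠ a → ∑ y, P x y * V y ≤ α * V x) (t : ℕ) :
    indicatorCompl a ⬝ᵥ (diagonal π * taboo P a ^ t) *ᵥ indicatorCompl a ≤ α ^ (t + 1) := by
  have hπ0 : 0 ≤ π := fun x => (hπ x).le
  have hP0 : ∀ x y, 0 ≤ P x y := fun _ _ => nonneg_of_mem_rowStochastic hP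
  have hQ := posSemidef_diagonal_mul_taboo (a := a) hM
  have hle : ∀ x, x ⬝ᵥ (diagonal π * taboo P a) *ᵥ x ≤ α * (x ⬝ᵥ diagonal π *ᵥ x) :=
    dotProduct_diagonal_mul_mulVec_le hπ0 (semiconjBy_diagonal_of_isHermitian hQ.isHermitian)
      (taboo_apply_nonneg hP0) hV (taboo_mulVec_le hP0 (fun x => (hV x).le) hα hdrift)
  have hB0 := indicatorCompl_dotProduct_diagonal_mul_mulVec hπ1 (one_mulVec 1) (by simp) a
  rw [mul_one, one_apply_eq, mul_one] at hB0
  have hB1 := (indicatorCompl_dotProduct_diagonal_mul_taboo_mulVec π).trans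
    (indicatorCompl_dotProduct_diagonal_mul_mulVec hπ1 (one_vecMul_of_mem_rowStochastic hP)
      hM.isHermitian a)
  have hPaa := le_apply_self_of_posSemidef hπ1 (one_vecMul_of_mem_rowStochastic hP) hM (hπ a)
  have hπa : π a ≤ 1 := hπ1 ▸ single_le_sum (fun x _ => hπ0 x) (mem_univ a)
  -- `(1 - π a) ^ 2 ≤ 1 - 2 π a + π a P a a ≤ α (1 - π a)`
  have hB0α : 1 - π a ≤ α := by
    have := hle (indicatorCompl a)
    rw [hB1, hB0] at this
    nlinarith [hπ a]
  calc indicatorCompl a ⬝ᵥ (diagonal π * taboo P a ^ t) *ᵥ indicatorCompl a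
      ≤ α ^ t * (indicatorCompl a ⬝ᵥ diagonal π *ᵥ indicatorCompl a) :=
        dotProduct_diagonal_mul_pow_mulVec_le hπ0 hQ hα hle t _
    _ ≤ α ^ t * α := by rw [hB0]; gcongr; linarith
    _ = α ^ (t + 1) := (pow_succ α t).symm

end ReversibleChain

section Drift

variable {X : Type*} [Fintype X] [DecidableEq X]

lemma abs_sum_sub_sum_le_of_forall_sub_le {μ ν : X → ℝ} (hμν : ∑ x, μ x = ∑ x, ν x) {b : ℝ}
    (h : ∀ A : Finset X, ∑ x ∈ A, ν x - ∑ x ∈ A, μ x ≤ b) (A : Finset X) :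
    |∑ x ∈ A, μ x - ∑ x ∈ A, ν x| ≤ b := by
  have hc := h Aᶜ
  rw [← sum_compl_add_sum A μ, ← sum_compl_add_sum A ν] at hμν
  rw [abs_le]
  constructor <;> linarith [h A]

variable {π : X → ℝ} {P : Matrix X X ℝ}

lemma sum_pow_succ_apply_sub_sum (hP : P ∈ rowStochastic ℝ X) (t : ℕ) (x : X) (A : Finset X) :
    ∑ y ∈ A, (P ^ (t + 1)) x y - ∑ y ∈ A, π y
      = ∑ z, P x z * (∑ y ∈ A, (P ^ t) z y - ∑ y ∈ A, π y) := by
  simp_rw [mul_sub, sum_sub_distrib, ← sum_mul, sum_row_of_mem_rowStochastic hP, one_mul,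
    mul_sum, pow_succ', mul_apply]
  rw [sum_comm]

lemma one_le_mul_of_drift (hP : P ∈ rowStochastic ℝ X) {V : X → ℝ} (hV : ∀ x, 1 ≤ V x)
    {α : ℝ} {x : X} (hdrift : ∑ y, P x y * V y ≤ α * V x) : 1 ≤ α * V x := calc
  1 = ∑ y, P x y := (sum_row_of_mem_rowStochastic hP x).symm
  _ ≤ ∑ y, P x y * V y :=
      sum_le_sum fun y _ => le_mul_of_one_le_right (nonneg_of_mem_rowStochastic hP) (hV y)
  _ ≤ α * V x := hdrift

lemma abs_sum_pow_apply_sub_le_of_drift (hπ : ∀ x, 0 ≤ π x) (hπ1 : ∑ x, π x = 1)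
    (hP : P ∈ rowStochastic ℝ X) {a : X} {V : X → ℝ} (hV : ∀ x, 1 ≤ V x) {α : ℝ} (hα : 0 ≤ α)
    (hdrift : ∀ x, x ≠ a → ∑ y, P x y * V y ≤ α * V x)
    (hatom : ∀ t (A : Finset X), |∑ y ∈ A, (P ^ t) a y - ∑ y ∈ A, π y| ≤ α ^ (t + 1))
    (t : ℕ) (x : X) (A : Finset X) :
    |∑ y ∈ A, (P ^ t) x y - ∑ y ∈ A, π y| ≤ α ^ (t + 1) * V x := by
  have hatomV : ∀ t A, |∑ y ∈ A, (P ^ t) a y - ∑ y ∈ A, π y| ≤ α ^ (t + 1) * V a :=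
    fun t A => (hatom t A).trans (le_mul_of_one_le_right (pow_nonneg hα _) (hV a))
  induction t generalizing x with
  | zero =>
    rcases eq_or_ne x a with rfl | hx
    · exact hatomV 0 A
    have h1 := one_le_mul_of_drift hP hV (hdrift x hx)
    have hA0 : 0 ≤ ∑ y ∈ A, π y := sum_nonneg fun y _ => hπ y
    have hA1 : ∑ y ∈ A, π y ≤ 1 :=
      hπ1 ▸ sum_le_sum_of_subset_of_nonneg (subset_univ A) fun y _ _ => hπ y
    simp only [pow_zero, zero_add, pow_one, one_apply, sum_ite_eq]
    rw [abs_le]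
    split_ifs <;> constructor <;> linarith
  | succ t ih =>
    rcases eq_or_ne x a with rfl | hx
    · exact hatomV (t + 1) A
    have hP0 : ∀ z, 0 ≤ P x z := fun _ => nonneg_of_mem_rowStochastic hP
    calc |∑ y ∈ A, (P ^ (t + 1)) x y - ∑ y ∈ A, π y|
        ≤ ∑ z, |P x z * (∑ y ∈ A, (P ^ t) z y - ∑ y ∈ A, π y)| := by
          rw [sum_pow_succ_apply_sub_sum hP]; exact abs_sum_le_sum_abs _ _
      _ ≤ ∑ z, P x z * (α ^ (t + 1) * V z) := sum_le_sum fun z _ => by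
          rw [abs_mul, abs_of_nonneg (hP0 z)]
          exact mul_le_mul_of_nonneg_left (ih z) (hP0 z)
      _ = α ^ (t + 1) * ∑ z, P x z * V z := by
          rw [mul_sum]; exact sum_congr rfl fun z _ => by ring
      _ ≤ α ^ (t + 1) * (α * V x) := mul_le_mul_of_nonneg_left (hdrift x hx) (pow_nonneg hα _)
      _ = α ^ (t + 1 + 1) * V x := by ring

lemma mixTimeFrom_le_of_tvDist_le {x : X} {C α ε : ℝ} (hα0 : 0 < α) (hα1 : α < 1) (hε : 0 < ε)
    (hεC : ε ≤ C) (h : ∀ t : ℕ, tvDist (fun y => (P ^ t) x y) π ≤ C * α ^ (t + 1)) :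
    (mixTimeFrom P π ε x : ℝ) ≤ (1 - α)⁻¹ * Real.log (C / ε) := by
  set L := (1 - α)⁻¹ * Real.log (C / ε)
  have hC : 0 < C := hε.trans_le hεC
  have hlog : (1 - α) * L = Real.log (C / ε) := by
    simp only [L]; field_simp [(sub_pos.2 hα1).ne']
  have hL : 0 ≤ L := mul_nonneg (inv_nonneg.2 (sub_pos.2 hα1).le)
    (Real.log_nonneg ((one_le_div hε).2 hεC))
  set n := ⌊L⌋₊
  have hpow : α ^ (n + 1) ≤ ε / C := calc
    α ^ (n + 1) ≤ Real.exp (α - 1) ^ (n + 1) :=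
        pow_le_pow_left₀ hα0.le (by linarith [Real.add_one_le_exp (α - 1)]) _
    _ = Real.exp (-((1 - α) * (n + 1))) := by rw [← Real.exp_nat_mul]; push_cast; ring_nf
    _ ≤ Real.exp (-((1 - α) * L)) := by
        gcongr
        exact (Nat.lt_floor_add_one L).le
    _ = ε / C := by rw [hlog, Real.exp_neg, Real.exp_log (div_pos hC hε), inv_div]
  have hmix : mixTimeFrom P π ε x ≤ n := Nat.sInf_le <| (h n).trans <| by
    calc C * α ^ (n + 1) ≤ C * (ε / C) := mul_le_mul_of_nonneg_left hpow hC.le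
      _ = ε := by field_simp
  exact (Nat.cast_le.2 hmix).trans (Nat.floor_le hL)

end Drift

theorem stmt14_general {X : Type*} [Fintype X] [DecidableEq X]
    (π : X → ℝ) (hπpos : ∀ x, 0 < π x) (hπsum : ∑ x, π x = 1)
    (P : Matrix X X ℝ) (hProw : ∀ x, ∑ y, P x y = 1) (hPnn : ∀ x y, 0 ≤ P x y)
    (hpsd : (Matrix.of fun x y => Real.sqrt (π x / π y) * P x y).PosSemidef)
    (xstar : X) (V : X → ℝ) (hV : ∀ x, 1 ≤ V x)
    (α : ℝ) (hα0 : 0 < α) (hα1 : α < 1)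
    (hdrift : ∀ x, x ≠ xstar → ∑ y, P x y * V y ≤ α * V x) :
    (∀ t : ℕ, ∀ x, tvDist (fun y => (P ^ t) x y) π ≤ 2 * V x * α ^ (t + 1)) ∧
    (∀ ε : ℝ, 0 < ε → ε < 1 / 2 → ∀ x,
      (mixTimeFrom P π ε x : ℝ) ≤ (1 - α)⁻¹ * Real.log (2 * V x / ε)) := by
  have hπ0 : ∀ x, 0 ≤ π x := fun x => (hπpos x).le
  have hP : P ∈ rowStochastic ℝ X := mem_rowStochastic_iff_sum.2 ⟨hPnn, hProw⟩
  have hM := posSemidef_diagonal_mul_of_posSemidef_sqrt hπpos hpsd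
  have hdiag : ∀ t, π xstar ≤ (P ^ t) xstar xstar := fun t =>
    le_apply_self_of_posSemidef hπsum (one_vecMul_of_mem_rowStochastic (pow_mem hP t))
      (posSemidef_diagonal_mul_pow hπ0 hM t) (hπpos xstar)
  have hatom : ∀ t (A : Finset X),
      |∑ y ∈ A, (P ^ t) xstar y - ∑ y ∈ A, π y| ≤ α ^ (t + 1) := fun t =>
    abs_sum_sub_sum_le_of_forall_sub_le
      (by rw [sum_row_of_mem_rowStochastic (pow_mem hP t), hπsum]) fun A =>
      (sum_sub_sum_pow_apply_le hπpos hP hM hdiag t A).trans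
        (indicatorCompl_dotProduct_diagonal_mul_taboo_pow_mulVec_le hπpos hπsum hP hM
          (fun x => one_pos.trans_le (hV x)) hα0.le hdrift t)
  have htv : ∀ t x, tvDist (fun y => (P ^ t) x y) π ≤ 2 * V x * α ^ (t + 1) := fun t x =>
    ciSup_le fun A =>
      (abs_sum_pow_apply_sub_le_of_drift hπ0 hπsum hP hV hα0.le hdrift hatom t x A).trans
        (by nlinarith [pow_pos hα0 (t + 1), hV x])
  exact ⟨htv, fun ε hε hε2 x =>
    mixTimeFrom_le_of_tvDist_le hα0 hα1 hε (by linarith [hV x]) (htv · x)⟩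

theorem stmt14 {X : Type*} [Fintype X] [DecidableEq X] [Nonempty X]
    (π : X → ℝ) (hπpos : ∀ x, 0 < π x) (hπsum : ∑ x, π x = 1)
    (P : Matrix X X ℝ) (hProw : ∀ x, ∑ y, P x y = 1) (hPnn : ∀ x y, 0 ≤ P x y)
    (hstat : ∀ y, ∑ x, π x * P x y = π y)
    (hrev : ∀ x y, π x * P x y = π y * P y x)
    (hpsd : (Matrix.of fun x y => Real.sqrt (π x / π y) * P x y).PosSemidef)
    (xstar : X) (V : X → ℝ) (hV : ∀ x, 1 ≤ V x)
    (α : ℝ) (hα0 : 0 < α) (hα1 : α < 1)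
    (hdrift : ∀ x, x ≠ xstar → ∑ y, P x y * V y ≤ α * V x) :
    (∀ t : ℕ, ∀ x, tvDist (fun y => (P ^ t) x y) π ≤ 2 * V x * α ^ (t + 1)) ∧
    (∀ ε : ℝ, 0 < ε → ε < 1 / 2 → ∀ x,
      (mixTimeFrom P π ε x : ℝ) ≤ (1 - α)⁻¹ * Real.log (2 * V x / ε)) :=
  stmt14_general π hπpos hπsum P hProw hPnn hpsd xstar V hV α hα0 hα1 hdrift
end
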